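/- arXiv:2112.05382 — 7 statements merged into one kernel-verified Lean document; each statement's English description precedes it below -/
import Mathlib

section
/- If a trigonometric polynomial T of degree n (i.e., T(x) = a_0 + Σ_{k=1}^n (a_k cos(kx) + b_k sin(kx)) with real coefficients) attains its maximal absolute value on the circle at x = 0, then T has no zero in the open interval (-π/(2n), π/(2n)). -/
/-!
Normalize `T 0 = M > 0` and suppose `T x₀ = 0` with `0 < x₀ < π/(2n)`. A slight perturbation `W` of
`M cos (n x) - T x` is a trigonometric polynomial of degree `n` with a double zero at `0` (where `T`
is maximal), positive at `x₀` (where `cos (n x₀) > 0`) and of sign `(-1)^j` at `jπ/n` for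
`0 < j < 2n` (since `|T| ≤ M`). So `W` has `2n - 1` zeros in `(x₀, 2π)` besides its double zero
at `0`. But `z ^ n W(x)` is a complex polynomial of degree `≤ 2n` in `z = exp (i x)`, hence `W = 0`,
contradicting `W x₀ > 0`.
-/

open Real Finset Polynomial

open Complex (I)
open scoped Complex

def trigPolyDegreeLE (n : ℕ) : Submodule ℝ (ℝ → ℝ) where
  carrier := {f | ∃ a b : ℕ → ℝ, ∀ x,
    f x = a 0 + ∑ k ∈ Icc 1 n, (a k * cos (k * x) + b k * sin (k * x))}
  zero_mem' := ⟨0, 0, by simp⟩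
  add_mem' := by
    rintro f g ⟨a, b, hf⟩ ⟨a', b', hg⟩
    refine ⟨a + a', b + b', fun x => ?_⟩
    simp only [Pi.add_apply, hf, hg]
    rw [← add_add_add_comm, ← sum_add_distrib]
    congr 1
    exact sum_congr rfl fun k _ => by ring
  smul_mem' := by
    rintro c f ⟨a, b, hf⟩
    refine ⟨c • a, c • b, fun x => ?_⟩
    simp only [Pi.smul_apply, smul_eq_mul, hf, mul_add, mul_sum]
    congr 1
    exact sum_congr rfl fun k _ => by ring

namespace trigPolyDegreeLE

variable {n : ℕ} {f : ℝ → ℝ}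

theorem cos_nat_mul_mem {k : ℕ} (hk : k ≤ n) : (fun x => cos (k * x)) ∈ trigPolyDegreeLE n := by
  refine ⟨Pi.single k 1, 0, fun x => ?_⟩
  rcases Nat.eq_zero_or_pos k with rfl | hk0
  · simp +contextual [Pi.single_apply, Nat.pos_iff_ne_zero.1]
  · simp [Pi.single_apply, hk0.ne', hk, Nat.one_le_iff_ne_zero]

theorem const_mem (c : ℝ) : (fun _ => c) ∈ trigPolyDegreeLE n := by
  convert (trigPolyDegreeLE n).smul_mem c (cos_nat_mul_mem (Nat.zero_le n)) using 1
  ext; simp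

theorem comp_neg_mem (hf : f ∈ trigPolyDegreeLE n) : (fun x => f (-x)) ∈ trigPolyDegreeLE n := by
  obtain ⟨a, b, hf⟩ := hf
  refine ⟨a, -b, fun x => ?_⟩
  simp only [hf, mul_neg, cos_neg, sin_neg, Pi.neg_apply]
  congr 1
  exact sum_congr rfl fun k _ => by ring

theorem differentiable_of_mem (hf : f ∈ trigPolyDegreeLE n) : Differentiable ℝ f := by
  obtain ⟨a, b, hf⟩ := hf
  rw [funext hf]
  fun_prop

end trigPolyDegreeLE

theorem cexp_mul_I_pow_add_pow_sub {n k : ℕ} (hk : k ≤ n) (A B x : ℝ) :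
    (A - B * I) / 2 * cexp (x * I) ^ (n + k)
      + (A + B * I) / 2 * cexp (x * I) ^ (n - k)
      = cexp (x * I) ^ n * (A * cos (k * x) + B * sin (k * x) : ℝ) := by
  have hexp : ∀ θ : ℝ, cexp (θ * I) = cos θ + sin θ * I := fun θ => by
    rw [Complex.exp_mul_I, ← Complex.ofReal_cos, ← Complex.ofReal_sin]
  have hpow : cexp (x * I) ^ k = cexp (((k * x : ℝ) : ℂ) * I) := by
    rw [← Complex.exp_nat_mul]; push_cast; ring_nf
  have hsub : cexp (x * I) ^ (n - k)
      = cexp (x * I) ^ n * cexp (((-(k * x) : ℝ) : ℂ) * I) := by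
    rw [pow_sub₀ _ (Complex.exp_ne_zero _) hk, hpow, ← Complex.exp_neg]
    push_cast; ring_nf
  rw [pow_add, hsub, hpow, hexp (k * x), hexp (-(k * x)), cos_neg, sin_neg]
  simp only [Complex.ofReal_add, Complex.ofReal_mul, Complex.ofReal_neg]
  linear_combination (-(cexp (x * I)) ^ n * B * sin (k * x)) * Complex.I_sq

noncomputable def circlePolynomial (n : ℕ) (a b : ℕ → ℝ) : ℂ[X] :=
  C (a 0 : ℂ) * X ^ n + ∑ k ∈ Icc 1 n,
    (C ((a k - b k * I) / 2) * X ^ (n + k) + C ((a k + b k * I) / 2) * X ^ (n - k))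

theorem natDegree_circlePolynomial_le (n : ℕ) (a b : ℕ → ℝ) :
    (circlePolynomial n a b).natDegree ≤ 2 * n := by
  refine natDegree_add_le_of_degree_le ((natDegree_C_mul_X_pow_le _ _).trans (by omega))
    (natDegree_sum_le_of_forall_le _ _ fun k hk => natDegree_add_le_of_degree_le ?_ ?_) <;>
  exact (natDegree_C_mul_X_pow_le _ _).trans (by have := (mem_Icc.1 hk).2; omega)

theorem eval_circlePolynomial (n : ℕ) (a b : ℕ → ℝ) (x : ℝ) :
    (circlePolynomial n a b).eval (cexp (x * I)) = cexp (x * I) ^ n *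
      (a 0 + ∑ k ∈ Icc 1 n, (a k * cos (k * x) + b k * sin (k * x)) : ℝ) := by
  simp only [circlePolynomial, eval_add, eval_mul, eval_C, eval_pow, eval_X, eval_finsetSum]
  rw [sum_congr rfl fun k hk => cexp_mul_I_pow_add_pow_sub (mem_Icc.1 hk).2 (a k) (b k) x,
    ← mul_sum]
  push_cast
  ring

theorem hasDerivAt_cexp_ofReal_mul_I (x : ℝ) :
    HasDerivAt (fun y : ℝ => cexp (y * I)) (cexp (x * I) * I) x := by
  simpa using (((hasDerivAt_id (x : ℂ)).mul_const I).cexp).comp_ofReal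

theorem isRoot_derivative_of_eval_cexp_eq {P : ℂ[X]} {n : ℕ} {f : ℝ → ℝ}
    (hP : ∀ x : ℝ, P.eval (cexp (x * I)) = cexp (x * I) ^ n * f x) {x₀ : ℝ}
    (hf : f x₀ = 0) (hf' : HasDerivAt f 0 x₀) :
    P.IsRoot (cexp (x₀ * I)) ∧ P.derivative.IsRoot (cexp (x₀ * I)) := by
  set u := cexp (x₀ * I)
  refine ⟨by simp [IsRoot, u, hP, hf], ?_⟩
  have hlhs : HasDerivAt (fun x : ℝ => P.eval (cexp (x * I))) _ x₀ :=
    (P.hasDerivAt u).comp (h₂ := fun z => P.eval z) x₀ (hasDerivAt_cexp_ofReal_mul_I x₀)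
  have hrhs := ((hasDerivAt_cexp_ofReal_mul_I x₀).fun_pow n).fun_mul hf'.ofReal_comp
  rw [funext hP] at hlhs
  have h := hlhs.unique hrhs
  simp only [hf, Complex.ofReal_zero, mul_zero, add_zero] at h
  exact (mul_eq_zero.1 h).resolve_right (mul_ne_zero (Complex.exp_ne_zero _) Complex.I_ne_zero)

theorem cexp_mul_I_injOn_Ico : Set.InjOn (fun x : ℝ => cexp (x * I)) (Set.Ico 0 (2 * π)) :=
  fun _ hx _ hy h => Circle.exp_injOn_Ico (by simp) hx hy (Subtype.ext h)

theorem exists_finset_card_eq_of_alternating {f : ℝ → ℝ} (hf : Continuous f) {t : ℕ → ℝ}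
    (ht : StrictMono t) {m : ℕ} (hsign : ∀ j ≤ m, 0 < (-1) ^ j * f (t j)) :
    ∃ s : Finset ℝ, #s = m ∧ ∀ y ∈ s, y ∈ Set.Ioo (t 0) (t m) ∧ f y = 0 := by
  have hzero : ∀ j < m, ∃ z ∈ Set.Ioo (t j) (t (j + 1)), f z = 0 := by
    intro j hj
    have hnext : (-1) ^ j * f (t (j + 1)) < 0 := by
      have := hsign (j + 1) hj
      rw [pow_succ] at this
      linarith
    obtain ⟨z, hz, hz0⟩ := intermediate_value_Ioo' (ht j.lt_succ_self).le
      (by fun_prop : Continuous fun x => (-1) ^ j * f x).continuousOn ⟨hnext, hsign j hj.le⟩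
    exact ⟨z, hz, by simpa using hz0⟩
  choose! z hz using hzero
  have hmono : StrictMonoOn z (Set.Iio m) := fun i hi j hj hij =>
    calc z i < t (i + 1) := (hz i hi).1.2
      _ ≤ t j := ht.monotone hij
      _ < z j := (hz j hj).1.1
  refine ⟨(range m).image z, ?_, ?_⟩
  · rw [card_image_of_injOn (by rw [coe_range]; exact hmono.injOn), card_range]
  · simp only [mem_image, mem_range]
    rintro _ ⟨j, hj, rfl⟩
    exact ⟨⟨(ht.monotone j.zero_le).trans_lt (hz j hj).1.1,
      (hz j hj).1.2.trans_le (ht.monotone hj)⟩, (hz j hj).2⟩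

theorem trigPolyDegreeLE.eq_zero_of_double_zero {n : ℕ} {f : ℝ → ℝ}
    (hf : f ∈ trigPolyDegreeLE n) (h0 : f 0 = 0) (h0' : HasDerivAt f 0 0) {s : Finset ℝ}
    (hs : ∀ y ∈ s, y ∈ Set.Ioo 0 (2 * π) ∧ f y = 0)
    (hcard : 2 * n < #s + 2) : f = 0 := by
  obtain ⟨a, b, hab⟩ := hf
  set e : ℝ → ℂ := fun x => cexp (x * I)
  set P := circlePolynomial n a b
  have hP (x : ℝ) : P.eval (e x) = e x ^ n * f x := by rw [hab, eval_circlePolynomial]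
  suffices hP0 : P = 0 by
    funext x
    simpa [hP0, e, Complex.exp_ne_zero] using (hP x).symm
  by_contra hP0
  obtain ⟨Q, hQ⟩ : (X - C (e 0)) ^ 2 ∣ P := (le_rootMultiplicity_iff hP0).1
    ((one_lt_rootMultiplicity_iff_isRoot hP0).2 (isRoot_derivative_of_eval_cexp_eq hP h0 h0'))
  have hQ0 : Q ≠ 0 := right_ne_zero_of_mul (hQ ▸ hP0)
  have hroots : (s.image e).val ⊆ Q.roots := by
    intro z hz
    obtain ⟨y, hy, rfl⟩ := mem_image.1 hz
    have hy0 : e y ≠ e 0 := fun h => (hs y hy).1.1.ne'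
      (cexp_mul_I_injOn_Ico (Set.Ioo_subset_Ico_self (hs y hy).1) ⟨le_rfl, two_pi_pos⟩ h)
    have := hP y
    rw [(hs y hy).2, Complex.ofReal_zero, mul_zero, hQ, eval_mul] at this
    refine (mem_roots hQ0).2 ((mul_eq_zero.1 this).resolve_left ?_)
    simpa [sub_eq_zero] using hy0
  have hcard_roots := card_le_degree_of_subset_roots hroots
  rw [card_image_of_injOn
    (cexp_mul_I_injOn_Ico.mono fun y hy => Set.Ioo_subset_Ico_self (hs y hy).1)] at hcard_roots
  have hdeg : P.natDegree = 2 + Q.natDegree := by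
    rw [hQ, natDegree_mul (pow_ne_zero 2 (X_sub_C_ne_zero _)) hQ0, natDegree_pow,
      natDegree_X_sub_C]
  have : P.natDegree ≤ 2 * n := natDegree_circlePolynomial_le n a b
  omega

/-- The perturbation `ε (2 cos (n x) - 1 - cos x)` of `M cos (n x) - T x` vanishes to second order
at `0` and makes the signs at the points `jπ/n` strict. -/
noncomputable def cosComparison (n : ℕ) (M ε : ℝ) (T : ℝ → ℝ) (x : ℝ) : ℝ :=
  (M + 2 * ε) * cos (n * x) - T x - ε * (1 + cos x)

section cosComparison

variable {n : ℕ} {M ε : ℝ} {T : ℝ → ℝ}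

theorem cosComparison_mem (hn : 1 ≤ n) (hT : T ∈ trigPolyDegreeLE n) :
    cosComparison n M ε T ∈ trigPolyDegreeLE n := by
  have h : cosComparison n M ε T = (M + 2 * ε) • (fun x => cos (n * x)) - T
      - ε • ((fun _ => 1) + fun x => cos ((1 : ℕ) * x)) := by
    funext x; simp [cosComparison]; ring
  rw [h]
  exact sub_mem (sub_mem (Submodule.smul_mem _ _ (trigPolyDegreeLE.cos_nat_mul_mem le_rfl)) hT)
    (Submodule.smul_mem _ _
      (add_mem (trigPolyDegreeLE.const_mem 1) (trigPolyDegreeLE.cos_nat_mul_mem hn)))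

theorem cosComparison_zero (hT : T 0 = M) : cosComparison n M ε T 0 = 0 := by
  simp [cosComparison, hT]; ring

theorem hasDerivAt_cosComparison_zero (hT : HasDerivAt T 0 0) :
    HasDerivAt (cosComparison n M ε T) 0 0 := by
  have hcos (c : ℝ) : HasDerivAt (fun x => cos (c * x)) 0 0 := by
    simpa using ((hasDerivAt_id (0 : ℝ)).const_mul c).cos
  have h := (((hcos n).const_mul (M + 2 * ε)).fun_sub hT).fun_sub
    (((hcos 1).const_add 1).const_mul ε)
  simp only [one_mul, mul_zero, sub_zero] at h
  exact h

theorem cosComparison_pos_of_eq_zero {x : ℝ} (hTx : T x = 0) (hε : 0 ≤ ε) (hc : 0 ≤ cos (n * x))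
    (hεM : 2 * ε < M * cos (n * x)) : 0 < cosComparison n M ε T x := by
  rw [cosComparison, hTx]
  nlinarith [mul_nonneg hε (sub_nonneg.2 (cos_le_one x)), mul_nonneg hε hc]

theorem neg_one_pow_mul_cosComparison_pos (hT : ∀ x, |T x| ≤ M) (hε : 0 < ε) {j : ℕ} (hj0 : 0 < j)
    (hj : j < 2 * n) : 0 < (-1) ^ j * cosComparison n M ε T (j * π / n) := by
  set x := j * π / n
  set s : ℝ := (-1) ^ j
  have hn : (0 : ℝ) < n := by norm_cast; omega
  have hx0 : 0 < x := by positivity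
  have hx2π : x < 2 * π := by
    rw [div_lt_iff₀ hn]
    have : (j : ℝ) < 2 * n := by exact_mod_cast hj
    nlinarith [pi_pos]
  have hcos_n : cos (n * x) = s := by
    rw [show n * x = j * π by simp only [x]; field_simp]; exact cos_nat_mul_pi j
  have hcos_lt : cos x < 1 := (cos_le_one x).lt_of_ne fun h =>
    hx0.ne' ((cos_eq_one_iff_of_lt_of_lt (by linarith) hx2π).1 h)
  have hs2 : s ^ 2 = 1 := by rw [← pow_mul, mul_comm, pow_mul, neg_one_sq, one_pow]
  have habs (y : ℝ) : s * y ≤ |y| :=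
    (le_abs_self _).trans (by rw [abs_mul, abs_neg_one_pow, one_mul])
  have hsT : s * T x ≤ M := (habs _).trans (hT x)
  have hsc : s * (1 + cos x) ≤ 1 + cos x :=
    (habs _).trans (abs_of_nonneg (by linarith [neg_one_le_cos x])).le
  have h : s * cosComparison n M ε T x = M + 2 * ε - s * T x - ε * (s * (1 + cos x)) := by
    rw [cosComparison, hcos_n]; linear_combination (M + 2 * ε) * hs2
  rw [h]
  nlinarith [mul_le_mul_of_nonneg_left hsc hε.le]

end cosComparison

theorem strictMono_ite_zero_nat_mul_pi_div {n : ℕ} {x₀ : ℝ} (hn : (0 : ℝ) < n) (hx₀ : x₀ < π / n) :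
    StrictMono fun j : ℕ => if j = 0 then x₀ else j * π / n :=
  strictMono_nat_of_lt_succ fun j => by
    rcases eq_or_ne j 0 with rfl | hj
    · simpa using hx₀
    · simp only [if_neg hj, j.succ_ne_zero, if_false]; gcongr; linarith

namespace trigPolyDegreeLE

variable {n : ℕ} {T : ℝ → ℝ}

theorem apply_ne_zero_of_mem_Ioo (hT : T ∈ trigPolyDegreeLE n) (hmax : ∀ x, |T x| ≤ T 0)
    (hpos : 0 < T 0) {x₀ : ℝ} (hx₀ : x₀ ∈ Set.Ioo 0 (π / (2 * n))) : T x₀ ≠ 0 := by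
  obtain ⟨hx₀, hx₀n⟩ := hx₀
  intro hz
  have hn : 1 ≤ n := Nat.one_le_iff_ne_zero.2 fun h => by simp [h] at hx₀n; linarith
  have hn' : (0 : ℝ) < n := by exact_mod_cast hn
  have hc : 0 < cos (n * x₀) := by
    rw [lt_div_iff₀ (by positivity)] at hx₀n
    exact cos_pos_of_mem_Ioo ⟨by nlinarith [pi_pos], by linarith⟩
  set ε := T 0 * cos (n * x₀) / 4
  have hε : 0 < ε := by positivity
  set W := cosComparison n (T 0) ε T
  have hWx₀ : 0 < W x₀ :=
    cosComparison_pos_of_eq_zero hz hε.le hc.le (by simp only [ε]; linarith [mul_pos hpos hc])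
  have hT' : HasDerivAt T 0 0 := by
    have hloc : IsLocalMax T 0 :=
      Filter.Eventually.of_forall fun x => (le_abs_self _).trans (hmax x)
    simpa [hloc.deriv_eq_zero] using (differentiable_of_mem hT 0).hasDerivAt
  obtain ⟨m, hm⟩ : ∃ m, 2 * n = m + 1 := ⟨2 * n - 1, by omega⟩
  set t : ℕ → ℝ := fun j => if j = 0 then x₀ else j * π / n
  have ht : StrictMono t := strictMono_ite_zero_nat_mul_pi_div hn'
    (hx₀n.trans (div_lt_div_of_pos_left pi_pos hn' (by linarith)))
  have hsign : ∀ j ≤ m, 0 < (-1) ^ j * W (t j) := by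
    intro j hj
    rcases eq_or_ne j 0 with rfl | hj0
    · simpa [t] using hWx₀
    · simpa [t, hj0] using
        neg_one_pow_mul_cosComparison_pos hmax hε (Nat.pos_of_ne_zero hj0) (by omega)
  obtain ⟨s, hs, hzeros⟩ := exists_finset_card_eq_of_alternating
    (differentiable_of_mem (cosComparison_mem hn hT)).continuous ht hsign
  have htm : t m < 2 * π := by
    have : (m : ℝ) + 1 = 2 * n := by exact_mod_cast hm.symm
    simp only [t, if_neg (by omega : m ≠ 0)]
    rw [div_lt_iff₀ hn']
    nlinarith [pi_pos]
  have hW0 : W = 0 := eq_zero_of_double_zero (cosComparison_mem hn hT) (cosComparison_zero rfl)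
    (hasDerivAt_cosComparison_zero hT') (s := s)
    (fun y hy => ⟨⟨hx₀.trans (hzeros y hy).1.1, (hzeros y hy).1.2.trans htm⟩, (hzeros y hy).2⟩)
    (by omega)
  exact hWx₀.ne' (congrFun hW0 x₀)

theorem apply_ne_zero_of_abs_lt (hT : T ∈ trigPolyDegreeLE n) (hmax : ∀ x, |T x| ≤ T 0)
    (hpos : 0 < T 0) {x : ℝ} (hx : |x| < π / (2 * n)) : T x ≠ 0 := by
  rcases lt_trichotomy x 0 with hx0 | rfl | hx0
  · simpa using apply_ne_zero_of_mem_Ioo (comp_neg_mem hT) (by simpa using fun y => hmax (-y))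
      (by simpa using hpos) ⟨neg_pos.2 hx0, by rwa [abs_of_neg hx0] at hx⟩
  · exact hpos.ne'
  · exact apply_ne_zero_of_mem_Ioo hT hmax hpos ⟨hx0, by rwa [abs_of_pos hx0] at hx⟩

end trigPolyDegreeLE

theorem trig_poly_max_no_zero_near_general
    (n : ℕ) (a b : ℕ → ℝ)
    (T : ℝ → ℝ)
    (hT : ∀ x, T x = a 0 + ∑ k ∈ Finset.Icc 1 n, (a k * Real.cos (k * x) + b k * Real.sin (k * x)))
    (hnz : ∃ x, T x ≠ 0)
    (hmax : ∀ x, |T x| ≤ |T 0|) :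
    ∀ x ∈ Set.Ioo (-(π / (2 * n))) (π / (2 * n)), T x ≠ 0 := by
  have hmem : T ∈ trigPolyDegreeLE n := ⟨a, b, hT⟩
  have hT0 : T 0 ≠ 0 := fun h => by
    obtain ⟨y, hy⟩ := hnz
    exact hy (abs_nonpos_iff.1 (by simpa [h] using hmax y))
  intro x hx
  rcases hT0.lt_or_gt with hneg | hpos
  · simpa using trigPolyDegreeLE.apply_ne_zero_of_abs_lt (neg_mem hmem)
      (by simpa [abs_of_neg hneg] using hmax) (neg_pos.2 hneg) (abs_lt.2 hx)
  · exact trigPolyDegreeLE.apply_ne_zero_of_abs_lt hmem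
      (by simpa [abs_of_pos hpos] using hmax) hpos (abs_lt.2 hx)

/-- If a trigonometric polynomial `T` of degree `n`, not identically zero,
attains its maximal absolute value at `x = 0`, then `T` has no zero in `(-π/(2n), π/(2n))`. -/
theorem trig_poly_max_no_zero_near
    (n : ℕ) (hn : 1 ≤ n) (a b : ℕ → ℝ)
    (T : ℝ → ℝ)
    (hT : ∀ x, T x = a 0 + ∑ k ∈ Finset.Icc 1 n, (a k * Real.cos (k * x) + b k * Real.sin (k * x)))
    (hnz : ∃ x, T x ≠ 0)
    (hmax : ∀ x, |T x| ≤ |T 0|) :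
    ∀ x ∈ Set.Ioo (-(π / (2 * n))) (π / (2 * n)), T x ≠ 0 :=
  trig_poly_max_no_zero_near_general n a b T hT hnz hmax
end

section
/- If a polynomial P ∈ ℝ[x₁,…,x_d] of degree at most n attains its maximal absolute value on the unit sphere S^{d-1} ⊂ ℝ^d at a point p and P is not identically zero on S^{d-1}, then every point q ∈ S^{d-1} with P(q) = 0 satisfies the angular distance bound arccos⟨p,q⟩ ≥ π/(2n). -/
/-!
Restrict `P` to the great circle through `p` and `q`: with `u` the unit vector orthogonal to `p`
in the plane of `p` and `q`, `f t = P (cos t • p + sin t • u)` is a trigonometric polynomial of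
degree at most `n` with `|f| ≤ |f 0|` and `f θ = 0` for `θ = arccos ⟪p, q⟫`. After normalising
`f 0 > 0`, the comparison function `g t = f 0 * cos (n (t - s)) - μ f t`, for a slightly negative
`s` and `μ < 1` close to `1`, alternates strictly in sign on the grid `s + kπ/n`; if
`θ < π/(2n)`, then `g 0 < 0 < g θ` adds two further sign changes in the first grid interval. So
`g` changes sign `2n + 1` times within one period, whereas a nonzero trigonometric polynomial of
degree at most `n` is `e^{-int} G(e^{it})` with `deg G ≤ 2n` and hence has at most `2n` zeros per
period.
-/

open Real Polynomial

/-- `f` is a real trigonometric polynomial of degree at most `n`, encoded as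
`f t = e^{-int} G(e^{it})` for a complex polynomial `G` of degree at most `2n`. -/
def IsTrigPolyDegLE (n : ℕ) (f : ℝ → ℝ) : Prop :=
  ∃ G : ℂ[X], G.natDegree ≤ 2 * n ∧
    ∀ t : ℝ, G.eval (Complex.exp (t * Complex.I)) = Complex.exp (n * t * Complex.I) * f t

theorem Complex.exp_ofReal_mul_I_pow (t : ℝ) (k : ℕ) :
    Complex.exp (t * I) ^ k = Complex.exp (k * t * I) := by
  rw [← Complex.exp_nat_mul, mul_assoc]

theorem Complex.exp_nat_mul_I_mul_exp_nat_mul_I (m n : ℕ) (t : ℝ) :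
    Complex.exp (m * t * I) * Complex.exp (n * t * I) = Complex.exp ((m + n : ℕ) * t * I) := by
  rw [← Complex.exp_add]; push_cast; ring_nf

namespace IsTrigPolyDegLE

variable {m n : ℕ} {f g : ℝ → ℝ}

theorem zero : IsTrigPolyDegLE n 0 :=
  ⟨0, by simp, fun t => by simp⟩

theorem one : IsTrigPolyDegLE 0 1 :=
  ⟨1, by simp, fun t => by simp⟩

theorem mono (hf : IsTrigPolyDegLE m f) (hmn : m ≤ n) : IsTrigPolyDegLE n f := by
  obtain ⟨G, hdeg, hG⟩ := hf
  refine ⟨X ^ (n - m) * G, natDegree_mul_le.trans ?_, fun t => ?_⟩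
  · have := natDegree_X_pow_le (R := ℂ) (n - m)
    omega
  · rw [eval_mul, eval_pow, eval_X, hG, Complex.exp_ofReal_mul_I_pow, ← mul_assoc,
      Complex.exp_nat_mul_I_mul_exp_nat_mul_I, Nat.sub_add_cancel hmn]

theorem add (hf : IsTrigPolyDegLE n f) (hg : IsTrigPolyDegLE n g) : IsTrigPolyDegLE n (f + g) := by
  obtain ⟨F, hFdeg, hF⟩ := hf
  obtain ⟨G, hGdeg, hG⟩ := hg
  exact ⟨F + G, natDegree_add_le_of_degree_le hFdeg hGdeg, fun t => by simp [hF, hG, mul_add]⟩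

theorem const_mul (hf : IsTrigPolyDegLE n f) (c : ℝ) : IsTrigPolyDegLE n fun t => c * f t := by
  obtain ⟨F, hFdeg, hF⟩ := hf
  exact ⟨C (c : ℂ) * F, (natDegree_C_mul_le _ _).trans hFdeg, fun t => by simp [hF]; ring⟩

theorem sub (hf : IsTrigPolyDegLE n f) (hg : IsTrigPolyDegLE n g) : IsTrigPolyDegLE n (f - g) := by
  obtain ⟨F, hFdeg, hF⟩ := hf
  obtain ⟨G, hGdeg, hG⟩ := hg
  exact ⟨F - G, (natDegree_sub_le_of_le hFdeg hGdeg).trans (max_self _).le,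
    fun t => by simp [hF, hG, mul_sub]⟩

theorem mul (hf : IsTrigPolyDegLE m f) (hg : IsTrigPolyDegLE n g) :
    IsTrigPolyDegLE (m + n) (f * g) := by
  obtain ⟨F, hFdeg, hF⟩ := hf
  obtain ⟨G, hGdeg, hG⟩ := hg
  refine ⟨F * G, natDegree_mul_le.trans (by omega), fun t => ?_⟩
  rw [eval_mul, hF, hG, ← Complex.exp_nat_mul_I_mul_exp_nat_mul_I, Pi.mul_apply]
  push_cast
  ring

theorem pow (hf : IsTrigPolyDegLE n f) (k : ℕ) : IsTrigPolyDegLE (k * n) (f ^ k) := by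
  induction k with
  | zero => simpa using one
  | succ k ih => simpa [pow_succ, add_mul] using ih.mul hf

theorem continuous (hf : IsTrigPolyDegLE n f) : Continuous f := by
  obtain ⟨G, -, hG⟩ := hf
  have hfG : f = fun t : ℝ =>
      (Complex.exp (-(n * t * Complex.I)) * G.eval (Complex.exp (t * Complex.I))).re := by
    funext t
    rw [hG, ← mul_assoc, ← Complex.exp_add, neg_add_cancel, Complex.exp_zero, one_mul,
      Complex.ofReal_re]
  rw [hfG]
  fun_prop

theorem card_le_of_forall_mem_Ico (hf : IsTrigPolyDegLE n f) (hf0 : ∃ t, f t ≠ 0) {s : ℝ}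
    {Z : Finset ℝ} (hZ : ↑Z ⊆ Set.Ico s (s + 2 * π)) (hZf : ∀ t ∈ Z, f t = 0) :
    Z.card ≤ 2 * n := by
  classical
  obtain ⟨G, hdeg, hG⟩ := hf
  have hG0 : G ≠ 0 := by
    rintro rfl
    obtain ⟨t, ht⟩ := hf0
    exact ht (by simpa [Complex.exp_ne_zero] using (hG t).symm)
  have hinj : Set.InjOn (fun t : ℝ => Complex.exp (t * Complex.I)) Z := fun x hx y hy hxy =>
    Circle.exp_injOn_Ico (by linarith) (hZ hx) (hZ hy) (Subtype.ext hxy)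
  calc Z.card = (Z.image fun t : ℝ => Complex.exp (t * Complex.I)).card :=
        (Finset.card_image_of_injOn hinj).symm
    _ ≤ G.natDegree := card_le_degree_of_subset_roots fun w hw => by
        obtain ⟨t, ht, rfl⟩ := Finset.mem_image.mp hw
        rw [mem_roots hG0, IsRoot, hG, hZf t ht, Complex.ofReal_zero, mul_zero]
    _ ≤ 2 * n := hdeg

end IsTrigPolyDegLE

theorem isTrigPolyDegLE_sum {ι : Type*} (s : Finset ι) {n : ℕ} {f : ι → ℝ → ℝ}
    (hf : ∀ i ∈ s, IsTrigPolyDegLE n (f i)) : IsTrigPolyDegLE n (∑ i ∈ s, f i) := by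
  classical
  induction s using Finset.induction_on with
  | empty => simpa using IsTrigPolyDegLE.zero
  | insert i s hi ih =>
    rw [Finset.sum_insert hi]
    exact (hf i (Finset.mem_insert_self i s)).add
      (ih fun j hj => hf j (Finset.mem_insert_of_mem hj))

theorem isTrigPolyDegLE_prod {ι : Type*} (s : Finset ι) {n : ι → ℕ} {f : ι → ℝ → ℝ}
    (hf : ∀ i ∈ s, IsTrigPolyDegLE (n i) (f i)) :
    IsTrigPolyDegLE (∑ i ∈ s, n i) (∏ i ∈ s, f i) := by
  classical
  induction s using Finset.induction_on with
  | empty => simpa using IsTrigPolyDegLE.one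
  | insert i s hi ih =>
    rw [Finset.sum_insert hi, Finset.prod_insert hi]
    exact (hf i (Finset.mem_insert_self i s)).mul
      (ih fun j hj => hf j (Finset.mem_insert_of_mem hj))

theorem isTrigPolyDegLE_cos_sub (n : ℕ) (s : ℝ) :
    IsTrigPolyDegLE n fun t => cos (n * (t - s)) := by
  refine ⟨C (Complex.exp (-(n * s * Complex.I)) / 2) * X ^ (2 * n) +
    C (Complex.exp (n * s * Complex.I) / 2), ?_, fun t => ?_⟩
  · exact natDegree_add_le_of_degree_le ((natDegree_C_mul_le _ _).trans (natDegree_X_pow_le _))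
      (by simp)
  · simp only [eval_add, eval_mul, eval_C, eval_pow, eval_X, Complex.exp_ofReal_mul_I_pow]
    push_cast
    have h₁ : Complex.exp (-(n * s * Complex.I)) * Complex.exp (2 * n * t * Complex.I) =
        Complex.exp (n * t * Complex.I) * Complex.exp (n * (t - s) * Complex.I) := by
      rw [← Complex.exp_add, ← Complex.exp_add]; ring_nf
    have h₂ : Complex.exp (n * s * Complex.I) =
        Complex.exp (n * t * Complex.I) * Complex.exp (-(n * (t - s)) * Complex.I) := by
      rw [← Complex.exp_add]; ring_nf
    rw [Complex.cos]
    linear_combination h₁ / 2 + h₂ / 2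

theorem isTrigPolyDegLE_cos_mul_add_sin_mul (a b : ℝ) :
    IsTrigPolyDegLE 1 fun t => cos t * a + sin t * b := by
  have hcos := (isTrigPolyDegLE_cos_sub 1 0).const_mul a
  have hsin := (isTrigPolyDegLE_cos_sub 1 (π / 2)).const_mul b
  simp only [Nat.cast_one, one_mul, sub_zero, cos_sub_pi_div_two] at hcos hsin
  convert hcos.add hsin using 1
  funext t
  rw [Pi.add_apply, mul_comm, mul_comm (sin t)]

theorem MvPolynomial.isTrigPolyDegLE_eval {σ : Type*} {n : ℕ} {P : MvPolynomial σ ℝ}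
    (hP : P.totalDegree ≤ n) {x : σ → ℝ → ℝ} (hx : ∀ i, IsTrigPolyDegLE 1 (x i)) :
    IsTrigPolyDegLE n fun t => MvPolynomial.eval (fun i => x i t) P := by
  have hsum : (fun t => MvPolynomial.eval (fun i => x i t) P) =
      ∑ m ∈ P.support, fun t => P.coeff m * (∏ i ∈ m.support, x i ^ m i) t := by
    funext t
    simp [MvPolynomial.eval_eq, Finset.sum_apply, Finset.prod_apply]
  rw [hsum]
  refine isTrigPolyDegLE_sum _ fun m hm => (IsTrigPolyDegLE.const_mul ?_ _)
  refine (isTrigPolyDegLE_prod _ fun i _ => (hx i).pow (m i)).mono ?_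
  simp only [mul_one]
  exact (MvPolynomial.le_totalDegree hm).trans hP

theorem exists_finset_zeros_of_sign_changes {f : ℝ → ℝ} (hf : Continuous f) {x : ℕ → ℝ}
    (hx : StrictMono x) {m : ℕ} (hsign : ∀ j < m, f (x j) * f (x (j + 1)) < 0) :
    ∃ Z : Finset ℝ, Z.card = m ∧ ↑Z ⊆ Set.Ioo (x 0) (x m) ∧ ∀ z ∈ Z, f z = 0 := by
  have hzero : ∀ j : Fin m, ∃ z ∈ Set.Ioo (x j) (x (j + 1)), f z = 0 := by
    intro j
    have hab := (hx (Nat.lt_succ_self j)).le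
    rcases mul_neg_iff.mp (hsign j j.isLt) with ⟨ha, hb⟩ | ⟨ha, hb⟩
    · exact intermediate_value_Ioo' hab hf.continuousOn ⟨hb, ha⟩
    · exact intermediate_value_Ioo hab hf.continuousOn ⟨ha, hb⟩
  choose z hz hfz using hzero
  have hz_mono : StrictMono z := fun i j hij =>
    calc z i < x (i + 1) := (hz i).2
      _ ≤ x j := hx.monotone (Fin.lt_def.mp hij)
      _ < z j := (hz j).1
  refine ⟨Finset.univ.image z, by simp [Finset.card_image_of_injective _ hz_mono.injective], ?_,
    by simpa using hfz⟩
  intro w hw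
  obtain ⟨j, -, rfl⟩ := Finset.mem_image.mp hw
  exact ⟨(hx.monotone (Nat.zero_le j)).trans_lt (hz j).1,
    (hz j).2.trans_le (hx.monotone j.isLt)⟩

theorem IsTrigPolyDegLE.le_of_sign_changes {n : ℕ} {f : ℝ → ℝ} (hf : IsTrigPolyDegLE n f)
    {x : ℕ → ℝ} (hx : StrictMono x) {m : ℕ} (hsign : ∀ j < m, f (x j) * f (x (j + 1)) < 0)
    (hperiod : x m ≤ x 0 + 2 * π) : m ≤ 2 * n := by
  rcases Nat.eq_zero_or_pos m with rfl | hm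
  · exact Nat.zero_le _
  obtain ⟨Z, hcard, hZ, hZf⟩ := exists_finset_zeros_of_sign_changes hf.continuous hx hsign
  have hf0 : ∃ t, f t ≠ 0 := ⟨x 0, left_ne_zero_of_mul (hsign 0 hm).ne⟩
  rw [← hcard]
  exact hf.card_le_of_forall_mem_Ico hf0
    (hZ.trans fun t ht => ⟨ht.1.le, ht.2.trans_le hperiod⟩) hZf

theorem mul_neg_of_neg_one_pow_mul_pos {a b : ℝ} {j : ℕ} (ha : 0 < (-1) ^ j * a)
    (hb : 0 < (-1) ^ (j + 1) * b) : a * b < 0 := by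
  rw [pow_succ] at hb
  rcases neg_one_pow_eq_or ℝ j with h | h <;> rw [h] at ha hb <;> nlinarith

theorem IsTrigPolyDegLE.not_alternating_on_grid_of_neg_of_pos {n : ℕ} {g : ℝ → ℝ}
    (hg : IsTrigPolyDegLE n g) (hn : n ≠ 0) {s a b : ℝ} (hsa : s < a) (hab : a < b)
    (hbs : b < s + π / n) (ha : g a < 0) (hb : 0 < g b) :
    ¬ ∀ k : ℕ, 0 < (-1) ^ k * g (s + k * π / n) := by
  intro hgrid
  have hnR : (0 : ℝ) < n := by positivity
  let x : ℕ → ℝ := fun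
    | 0 => s
    | 1 => a
    | 2 => b
    | j + 3 => s + (j + 1 : ℕ) * π / n
  have hx : StrictMono x := by
    refine strictMono_nat_of_lt_succ fun j => ?_
    match j with
    | 0 => exact hsa
    | 1 => exact hab
    | 2 =>
      show b < s + ((0 + 1 : ℕ) : ℝ) * π / n
      rwa [zero_add, Nat.cast_one, one_mul]
    | j + 3 =>
      show s + ((j + 1 : ℕ) : ℝ) * π / n < s + ((j + 1 + 1 : ℕ) : ℝ) * π / n
      gcongr
      exact_mod_cast Nat.lt_succ_self _
  have hsign : ∀ j, 0 < (-1) ^ j * g (x j) := fun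
    | 0 => by simpa using hgrid 0
    | 1 => by
      show 0 < (-1) ^ 1 * g a
      linarith
    | 2 => by
      show 0 < (-1) ^ 2 * g b
      linarith
    | j + 3 => by
      show 0 < (-1) ^ ((j + 1) + 2) * g (s + ((j + 1 : ℕ) : ℝ) * π / n)
      rw [pow_add, neg_one_sq, mul_one]
      exact hgrid (j + 1)
  have hperiod : x (2 * n + 1) ≤ x 0 + 2 * π := by
    rw [show 2 * n + 1 = (2 * n - 2) + 3 by omega]
    show s + ((2 * n - 2 + 1 : ℕ) : ℝ) * π / n ≤ s + 2 * π
    rw [show 2 * n - 2 + 1 = 2 * n - 1 by omega, Nat.cast_sub (by omega)]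
    have : ((2 * n : ℕ) - (1 : ℕ) : ℝ) * π / n = 2 * π - π / n := by push_cast; field_simp
    rw [this]
    linarith [div_pos pi_pos hnR]
  have := hg.le_of_sign_changes hx
    (fun j _ => mul_neg_of_neg_one_pow_mul_pos (hsign j) (hsign (j + 1))) hperiod
  omega

theorem IsTrigPolyDegLE.apply_ne_zero_of_abs_le_of_pos {n : ℕ} {f : ℝ → ℝ}
    (hf : IsTrigPolyDegLE n f) (h0 : 0 < f 0) (hmax : ∀ t, |f t| ≤ f 0) {θ : ℝ} (hθ0 : 0 < θ)
    (hθ : θ < π / (2 * n)) : f θ ≠ 0 := by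
  intro hfθ
  have hn : n ≠ 0 := by
    rintro rfl
    simp at hθ
    linarith
  have hnR : (0 : ℝ) < n := by positivity
  set s := (θ - π / (2 * n)) / 2 with hs
  have hθs : n * (θ - s) < π / 2 := by
    calc n * (θ - s) < n * (π / (2 * n)) := by gcongr; linarith
      _ = π / 2 := by field_simp
  have hcos_s : cos (n * s) < 1 := by
    rw [← cos_neg, ← cos_zero]
    exact cos_lt_cos_of_nonneg_of_le_pi_div_two le_rfl (by nlinarith) (by nlinarith)
  set μ := (1 + cos (n * s)) / 2 with hμ
  have hμ0 : 0 ≤ μ := by linarith [neg_one_le_cos (n * s)]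
  set g : ℝ → ℝ := fun t => f 0 * cos (n * (t - s)) - μ * f t with hg_def
  have hg : IsTrigPolyDegLE n g :=
    ((isTrigPolyDegLE_cos_sub n s).const_mul (f 0)).sub (hf.const_mul μ)
  have hgrid : ∀ k : ℕ, 0 < (-1) ^ k * g (s + k * π / n) := by
    intro k
    have hcos : cos (n * (s + k * π / n - s)) = (-1) ^ k := by
      rw [add_sub_cancel_left, mul_div_cancel₀ _ hnR.ne', cos_nat_mul_pi]
    have hsq : ((-1 : ℝ) ^ k) ^ 2 = 1 := by rw [← pow_mul, mul_comm, pow_mul]; norm_num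
    have hle : (-1) ^ k * f (s + k * π / n) ≤ f 0 := by
      refine (le_abs_self _).trans ?_
      rw [abs_mul, abs_pow, abs_neg, abs_one, one_pow, one_mul]
      exact hmax _
    simp only [hg_def, hcos]
    nlinarith
  have hg0 : g 0 < 0 := by
    simp only [hg_def, zero_sub, mul_neg, cos_neg]
    nlinarith
  have hgθ : 0 < g θ := by
    simp only [hg_def, hfθ, mul_zero, sub_zero]
    exact mul_pos h0 (cos_pos_of_mem_Ioo ⟨by nlinarith, hθs⟩)
  have hπn : π / n = 2 * (π / (2 * n)) := by field_simp
  exact hg.not_alternating_on_grid_of_neg_of_pos hn (by linarith) hθ0 (by linarith) hg0 hgθ hgrid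

theorem IsTrigPolyDegLE.apply_ne_zero_of_abs_le {n : ℕ} {f : ℝ → ℝ} (hf : IsTrigPolyDegLE n f)
    (h0 : f 0 ≠ 0) (hmax : ∀ t, |f t| ≤ |f 0|) {θ : ℝ} (hθ0 : 0 < θ) (hθ : θ < π / (2 * n)) :
    f θ ≠ 0 := by
  refine right_ne_zero_of_mul ((hf.const_mul (f 0)).apply_ne_zero_of_abs_le_of_pos
    (mul_self_pos.mpr h0) (fun t => ?_) hθ0 hθ)
  calc |f 0 * f t| = |f 0| * |f t| := abs_mul _ _
    _ ≤ |f 0| * |f 0| := mul_le_mul_of_nonneg_left (hmax t) (abs_nonneg _)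
    _ = f 0 * f 0 := abs_mul_abs_self _

section UnitSphere

open scoped RealInnerProductSpace

variable {E : Type*} [NormedAddCommGroup E] [InnerProductSpace ℝ E] {p q u : E}

theorem norm_cos_smul_add_sin_smul_sq (hp : ‖p‖ = 1) (hpu : ⟪p, u⟫ = 0) (t : ℝ) :
    ‖cos t • p + sin t • u‖ ^ 2 = cos t ^ 2 + sin t ^ 2 * ‖u‖ ^ 2 := by
  rw [norm_add_sq_real, real_inner_smul_left, real_inner_smul_right, hpu, norm_smul, norm_smul,
    hp, Real.norm_eq_abs, Real.norm_eq_abs, mul_pow, mul_pow, sq_abs, sq_abs]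
  ring

theorem norm_cos_smul_add_sin_smul (hp : ‖p‖ = 1) (hu : ‖u‖ = 1) (hpu : ⟪p, u⟫ = 0) (t : ℝ) :
    ‖cos t • p + sin t • u‖ = 1 := by
  refine (pow_eq_one_iff_of_nonneg (norm_nonneg _) two_ne_zero).mp ?_
  rw [norm_cos_smul_add_sin_smul_sq hp hpu, hu, one_pow, mul_one, cos_sq_add_sin_sq]

theorem exists_cos_smul_add_sin_smul_eq (hp : ‖p‖ = 1) (hq : ‖q‖ = 1)
    (hsin : sin (arccos ⟪p, q⟫) ≠ 0) :
    ∃ u : E, ‖u‖ = 1 ∧ ⟪p, u⟫ = 0 ∧ cos (arccos ⟪p, q⟫) • p + sin (arccos ⟪p, q⟫) • u = q := by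
  set θ := arccos ⟪p, q⟫
  have hpq : |⟪p, q⟫| ≤ 1 := by simpa [hp, hq] using abs_real_inner_le_norm p q
  have hcos : cos θ = ⟪p, q⟫ := cos_arccos (abs_le.mp hpq).1 (abs_le.mp hpq).2
  set u := (sin θ)⁻¹ • (q - cos θ • p)
  have hpu : ⟪p, u⟫ = 0 := by simp [u, real_inner_smul_right, inner_sub_right, hcos, hp]
  have hqu : cos θ • p + sin θ • u = q := by simp [u, smul_smul, mul_inv_cancel₀ hsin]
  refine ⟨u, (pow_eq_one_iff_of_nonneg (norm_nonneg _) two_ne_zero).mp ?_, hpu, hqu⟩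
  have hpyth := norm_cos_smul_add_sin_smul_sq hp hpu θ
  rw [hqu, hq] at hpyth
  have : sin θ ^ 2 * (‖u‖ ^ 2 - 1) = 0 := by linear_combination -hpyth - cos_sq_add_sin_sq θ
  linarith [(mul_eq_zero.mp this).resolve_left (pow_ne_zero 2 hsin)]

end UnitSphere

theorem real_sphere_polynomial_zero_avoidance_general
    (d n : ℕ) (P : MvPolynomial (Fin d) ℝ)
    (hdeg : P.totalDegree ≤ n)
    (p : EuclideanSpace ℝ (Fin d)) (hp : ‖p‖ = 1)
    (hmax : ∀ x : EuclideanSpace ℝ (Fin d), ‖x‖ = 1 →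
      |MvPolynomial.eval (fun i => x i) P| ≤ |MvPolynomial.eval (fun i => p i) P|)
    (hnz : ∃ x : EuclideanSpace ℝ (Fin d), ‖x‖ = 1 ∧ MvPolynomial.eval (fun i => x i) P ≠ 0) :
    ∀ q : EuclideanSpace ℝ (Fin d), ‖q‖ = 1 → MvPolynomial.eval (fun i => q i) P = 0 →
      Real.arccos (inner ℝ p q : ℝ) ≥ π / (2 * n) := by
  intro q hq hPq
  by_contra! hθ
  obtain ⟨x₀, hx₀, hPx₀⟩ := hnz
  have hPp : MvPolynomial.eval (fun i => p i) P ≠ 0 := fun h =>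
    hPx₀ (by simpa [h] using hmax x₀ hx₀)
  have hθ0 : 0 < arccos (inner ℝ p q) := by
    refine (arccos_nonneg _).lt_of_ne fun h => hPp ?_
    rwa [(inner_eq_one_iff_of_norm_eq_one hp hq).mp <|
      le_antisymm ((real_inner_le_norm p q).trans (by rw [hp, hq, one_mul]))
        (arccos_eq_zero.mp h.symm)]
  have hθπ : arccos (inner ℝ p q) < π := hθ.trans_le <| by
    rcases n.eq_zero_or_pos with rfl | hn
    · simp [pi_pos.le]
    · exact div_le_self pi_pos.le (by norm_cast; omega)
  obtain ⟨u, hu, hpu, hqu⟩ :=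
    exists_cos_smul_add_sin_smul_eq hp hq (sin_pos_of_pos_of_lt_pi hθ0 hθπ).ne'
  set f : ℝ → ℝ := fun t => MvPolynomial.eval (fun i => (cos t • p + sin t • u) i) P
  have hf : IsTrigPolyDegLE n f := MvPolynomial.isTrigPolyDegLE_eval hdeg fun i => by
    simpa using isTrigPolyDegLE_cos_mul_add_sin_mul (p i) (u i)
  have hf0 : f 0 = MvPolynomial.eval (fun i => p i) P := by simp [f]
  refine hf.apply_ne_zero_of_abs_le (hf0 ▸ hPp)
    (fun t => hf0 ▸ hmax _ (norm_cos_smul_add_sin_smul hp hu hpu t)) hθ0 hθ ?_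
  simpa only [f, hqu] using hPq

/-- If a real polynomial `P` in `d` variables of degree at most `n` attains its
maximal absolute value on the unit sphere `S^{d-1}` at `p`, and `P` is not identically zero on the
sphere, then every zero `q` of `P` on the sphere is at angular distance at least `π/(2n)` from `p`. -/
theorem real_sphere_polynomial_zero_avoidance
    (d n : ℕ) (hn : 1 ≤ n) (P : MvPolynomial (Fin d) ℝ)
    (hdeg : P.totalDegree ≤ n)
    (p : EuclideanSpace ℝ (Fin d)) (hp : ‖p‖ = 1)
    (hmax : ∀ x : EuclideanSpace ℝ (Fin d), ‖x‖ = 1 →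
      |MvPolynomial.eval (fun i => x i) P| ≤ |MvPolynomial.eval (fun i => p i) P|)
    (hnz : ∃ x : EuclideanSpace ℝ (Fin d), ‖x‖ = 1 ∧ MvPolynomial.eval (fun i => x i) P ≠ 0) :
    ∀ q : EuclideanSpace ℝ (Fin d), ‖q‖ = 1 → MvPolynomial.eval (fun i => q i) P = 0 →
      Real.arccos (inner ℝ p q : ℝ) ≥ π / (2 * n) :=
  real_sphere_polynomial_zero_avoidance_general d n P hdeg p hp hmax hnz
end

section
/- If a trigonometric polynomial T of degree n attains its maximal absolute value M = |T(0)| > 0 at 0, and also has a zero at x₀ with |x₀| = π/(2n), then T(x) = ±M cos(nx) for all x. -/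
open Real Finset
open scoped Polynomial

/-! After negating `T` and reflecting `x ↦ -x` we may assume `T 0 = M` and `x₀ = π / (2n)`.
Then `R x = M cos (n x) - T x` is a trigonometric polynomial of degree `n` with
`(-1)^k R (kπ/n) ≥ 0`, and a zero of `R` at a node `kπ/n` is a common extremum of `M cos (n x)`
and `T`, hence a double zero. Counting zeros with multiplicity on the `2n` arcs between
consecutive nodes gives at least `2n` of them in `[0, 2π)`, the double zero at `0` already paying
for the first arc, so `π / (2n)` is a `(2n+1)`-st one. But `e^{inx} R x` is a polynomial of
degree `≤ 2n` in `z = e^{ix}`, so `R = 0`. -/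

theorem Fin.le_sum_of_eq_zero_imp_two_le_succ {N : ℕ} [NeZero N] (c : Fin N → ℕ)
    (h : ∀ k, c k = 0 → 2 ≤ c (k + 1)) : N ≤ ∑ k, c k := by
  have hshift : #{k | c k = 0} ≤ #{k | 2 ≤ c k} :=
    card_le_card_of_injOn (· + 1) (fun k hk => by simp_all) (add_left_injective 1).injOn
  calc N = #{k | c k ≠ 0} + #{k | c k = 0} := by
        rw [add_comm, card_filter_add_card_filter_not, card_univ, Fintype.card_fin]
    _ ≤ #{k | c k ≠ 0} + #{k | 2 ≤ c k} := by gcongr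
    _ = ∑ k, ((if c k ≠ 0 then 1 else 0) + if 2 ≤ c k then 1 else 0) := by
        rw [sum_add_distrib, card_filter, card_filter]
    _ ≤ ∑ k, c k := sum_le_sum fun k _ => by split_ifs <;> omega

/-- When `f a * f b ≤ 0` and a zero of `f` at `a` is double, `f` has at least this many zeros in
`[a, b)` counted with multiplicity; a zero at `b` is charged to the next interval. -/
noncomputable def zeroCountLowerBound (f : ℝ → ℝ) (a b : ℝ) : ℕ :=
  if f a = 0 then 2 else if f b = 0 then 0 else 1

theorem exists_mem_Ico_zeroCountLowerBound_le {f : ℝ → ℝ} (hf : Continuous f) {a b : ℝ}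
    (hab : a < b) (hsign : f a * f b ≤ 0) (m : ℝ → ℕ) (hm₁ : ∀ x, f x = 0 → 1 ≤ m x)
    (hm₂ : f a = 0 → 2 ≤ m a) :
    ∃ p ∈ Set.Ico a b, (f a = 0 → p = a) ∧ zeroCountLowerBound f a b ≤ m p := by
  unfold zeroCountLowerBound
  by_cases ha : f a = 0
  · exact ⟨a, ⟨le_rfl, hab⟩, fun _ => rfl, by simpa [ha] using hm₂ ha⟩
  by_cases hb : f b = 0
  · exact ⟨a, ⟨le_rfl, hab⟩, fun h => absurd h ha, by simp [ha, hb]⟩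
  have hzero : (0 : ℝ) ∈ Set.uIcc (f a) (f b) := by
    rw [Set.mem_uIcc]
    rcases lt_or_gt_of_ne ha with h | h
    · exact Or.inl ⟨h.le, nonneg_of_mul_nonpos_right hsign h⟩
    · exact Or.inr ⟨nonpos_of_mul_nonpos_right hsign h, h.le⟩
  obtain ⟨p, hp, hfp⟩ := intermediate_value_uIcc hf.continuousOn hzero
  rw [Set.uIcc_of_le hab.le] at hp
  refine ⟨p, ⟨hp.1, lt_of_le_of_ne hp.2 ?_⟩, fun h => absurd h ha,
    by simpa [ha, hb] using hm₁ p hfp⟩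
  rintro rfl
  exact hb hfp

theorem le_sum_zeroCountLowerBound {f : ℝ → ℝ} {t : ℕ → ℝ} {N : ℕ} [NeZero N]
    (h₀ : f (t 0) = 0) : N ≤ ∑ k : Fin N, zeroCountLowerBound f (t k) (t (k + 1)) := by
  refine Fin.le_sum_of_eq_zero_imp_two_le_succ
    (fun k : Fin N => zeroCountLowerBound f (t k) (t (k + 1))) fun k hk => ?_
  have hk₁ : f (t (k + 1)) = 0 := by
    unfold zeroCountLowerBound at hk
    split_ifs at hk with h₁ h₂
    exact h₂
  have hwrap : ((k + 1 : Fin N) : ℕ) = k + 1 ∨ ((k + 1 : Fin N) : ℕ) = 0 := by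
    rcases Nat.lt_or_ge (k + 1) N with h | h
    · exact Or.inl (Fin.val_add_one_of_lt' h)
    · rw [Fin.val_add, Fin.val_one', Nat.add_mod_mod, show (k : ℕ) + 1 = N by omega, Nat.mod_self]
      exact Or.inr rfl
  have : f (t (k + 1 : Fin N)) = 0 := by rcases hwrap with h | h <;> rw [h] <;> assumption
  simp [zeroCountLowerBound, this]

theorem exists_finset_succ_le_sum_of_alternating {f : ℝ → ℝ} (hf : Continuous f) {t : ℕ → ℝ}
    (ht : StrictMono t) {N : ℕ} (hN : N ≠ 0) (hsign : ∀ k ≤ N, 0 ≤ (-1) ^ k * f (t k))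
    (h₀ : f (t 0) = 0) {x₁ : ℝ} (hx₁ : x₁ ∈ Set.Ioo (t 0) (t 1)) (hfx₁ : f x₁ = 0)
    (m : ℝ → ℕ) (hm₁ : ∀ x, f x = 0 → 1 ≤ m x) (hm₂ : ∀ k, f (t k) = 0 → 2 ≤ m (t k)) :
    ∃ S : Finset ℝ, ↑S ⊆ Set.Ico (t 0) (t N) ∧ N + 1 ≤ ∑ x ∈ S, m x := by
  have : NeZero N := ⟨hN⟩
  have hsign' (k : Fin N) : f (t k) * f (t (k + 1)) ≤ 0 := by
    have h₁ := hsign k k.2.le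
    have h₂ := hsign (k + 1) k.2
    rw [pow_succ] at h₂
    rcases neg_one_pow_eq_or ℝ k with h | h <;> rw [h] at h₁ h₂ <;> nlinarith
  choose p hpI hp₀ hpm using fun k : Fin N => exists_mem_Ico_zeroCountLowerBound_le hf
    (ht (Nat.lt_succ_self k)) (hsign' k) m hm₁ (hm₂ k)
  have hp_mono : StrictMono p := fun k j hkj =>
    calc p k < t (k + 1) := (hpI k).2
      _ ≤ t j := ht.monotone hkj
      _ ≤ p j := (hpI j).1
  -- `p 0 = t 0` carries the double zero at `t 0`, so `x₁` is counted on top of the `N`.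
  have hx₁p : x₁ ∉ univ.image p := by
    simp only [mem_image, mem_univ, true_and, not_exists]
    intro k hk
    rcases Nat.eq_zero_or_pos k with h | h
    · have : p k = t 0 := by simpa [h] using hp₀ k (by simpa [h] using h₀)
      linarith [hx₁.1]
    · linarith [hx₁.2, (hpI k).1, ht.monotone (Nat.one_le_iff_ne_zero.mpr h.ne')]
  have hweights : N ≤ ∑ k : Fin N, zeroCountLowerBound f (t k) (t (k + 1)) :=
    le_sum_zeroCountLowerBound h₀
  refine ⟨insert x₁ (univ.image p), ?_, ?_⟩
  · intro x hx
    simp only [coe_insert, coe_image, coe_univ, Set.image_univ, Set.mem_insert_iff,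
      Set.mem_range] at hx
    rcases hx with rfl | ⟨k, rfl⟩
    · exact ⟨hx₁.1.le, hx₁.2.trans_le (ht.monotone (Nat.one_le_iff_ne_zero.mpr hN))⟩
    · exact ⟨(ht.monotone k.val.zero_le).trans (hpI k).1,
        (hpI k).2.trans_le (ht.monotone k.2)⟩
  · rw [sum_insert hx₁p, sum_image hp_mono.injective.injOn]
    have := hweights.trans (sum_le_sum fun k _ => hpm k)
    have := hm₁ x₁ hfx₁
    omega

noncomputable def trigPoly (n : ℕ) (a b : ℕ → ℝ) (x : ℝ) : ℝ :=
  a 0 + ∑ k ∈ Icc 1 n, (a k * cos (k * x) + b k * sin (k * x))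

/-- `z ^ n` times the Laurent polynomial obtained from `cos (k x) = (z ^ k + z⁻¹ ^ k) / 2` and
`sin (k x) = (z ^ k - z⁻¹ ^ k) / (2 i)` at `z = exp (i x)`. -/
noncomputable def trigPoly.toPoly (n : ℕ) (a b : ℕ → ℝ) : ℂ[X] :=
  Polynomial.C (a 0 : ℂ) * Polynomial.X ^ n + ∑ k ∈ Icc 1 n,
    (Polynomial.C ((a k - b k * Complex.I) / 2) * Polynomial.X ^ (n + k) +
      Polynomial.C ((a k + b k * Complex.I) / 2) * Polynomial.X ^ (n - k))

theorem Polynomial.sum_rootMultiplicity_le_natDegree {R : Type*} [CommRing R] [IsDomain R]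
    [DecidableEq R] (p : R[X]) (s : Finset R) : ∑ z ∈ s, p.rootMultiplicity z ≤ p.natDegree :=
  calc ∑ z ∈ s, p.rootMultiplicity z = ∑ z ∈ s, p.roots.count z := by simp only [count_roots]
    _ ≤ ∑ z ∈ s ∪ p.roots.toFinset, p.roots.count z := sum_le_sum_of_subset subset_union_left
    _ = Multiset.card p.roots := Multiset.sum_count_eq_card fun z hz => by simp [hz]
    _ ≤ p.natDegree := p.card_roots'

theorem Polynomial.sum_rootMultiplicity_exp_mul_I_le_natDegree (p : ℂ[X]) {S : Finset ℝ}
    (hS : ↑S ⊆ Set.Ico 0 (2 * π)) :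
    ∑ x ∈ S, p.rootMultiplicity (Complex.exp (x * Complex.I)) ≤ p.natDegree := by
  classical
  have hinj : Set.InjOn (fun x : ℝ => Complex.exp (x * Complex.I)) S :=
    (Subtype.val_injective.comp_injOn (Circle.exp_injOn_Ico (by simp))).mono hS
  calc _ = ∑ z ∈ S.image fun x : ℝ => Complex.exp (x * Complex.I), p.rootMultiplicity z :=
        (sum_image hinj).symm
    _ ≤ p.natDegree := p.sum_rootMultiplicity_le_natDegree _

namespace trigPoly

variable {n : ℕ} {a b : ℕ → ℝ}

theorem sub_apply (a' b' : ℕ → ℝ) (x : ℝ) :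
    trigPoly n a b x - trigPoly n a' b' x = trigPoly n (a - a') (b - b') x := by
  simp only [trigPoly, Pi.sub_apply]
  rw [add_sub_add_comm, ← sum_sub_distrib]
  congr 1
  exact sum_congr rfl fun k _ => by ring

theorem neg_apply (x : ℝ) : -trigPoly n a b x = trigPoly n (-a) (-b) x := by
  simp only [trigPoly, Pi.neg_apply]
  rw [neg_add, ← sum_neg_distrib]
  congr 1
  exact sum_congr rfl fun k _ => by ring

theorem apply_neg (x : ℝ) : trigPoly n a b (-x) = trigPoly n a (-b) x := by
  simp only [trigPoly, mul_neg, cos_neg, sin_neg, Pi.neg_apply, neg_mul]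

theorem single_apply (hn : n ≠ 0) (M x : ℝ) :
    trigPoly n (Pi.single n M) 0 x = M * cos (n * x) := by
  rw [trigPoly, sum_eq_single_of_mem n (mem_Icc.mpr ⟨Nat.one_le_iff_ne_zero.mpr hn, le_rfl⟩)]
  · simp [hn.symm]
  · intro k _ hk
    simp [hk]

theorem differentiable : Differentiable ℝ (trigPoly n a b) := by
  unfold trigPoly
  fun_prop

theorem natDegree_toPoly_le : (toPoly n a b).natDegree ≤ 2 * n := by
  unfold toPoly
  refine (Polynomial.natDegree_add_le _ _).trans (max_le ?_ ?_)
  · exact (Polynomial.natDegree_C_mul_X_pow_le _ _).trans (by omega)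
  refine Polynomial.natDegree_sum_le_of_forall_le _ _ fun k hk => ?_
  have := (mem_Icc.mp hk).2
  refine (Polynomial.natDegree_add_le _ _).trans (max_le ?_ ?_) <;>
    exact (Polynomial.natDegree_C_mul_X_pow_le _ _).trans (by omega)

theorem toPoly_eval_exp (x : ℝ) :
    (toPoly n a b).eval (Complex.exp (x * Complex.I)) =
      Complex.exp (n * x * Complex.I) * trigPoly n a b x := by
  have hpow (m : ℕ) : Complex.exp (x * Complex.I) ^ m = Complex.exp (m * x * Complex.I) := by
    rw [← Complex.exp_nat_mul]; ring_nf
  simp only [toPoly, trigPoly, Polynomial.eval_add, Polynomial.eval_mul, Polynomial.eval_pow,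
    Polynomial.eval_C, Polynomial.eval_X, Polynomial.eval_finsetSum, hpow]
  push_cast
  rw [mul_add, mul_sum]
  congr 1
  · ring
  refine sum_congr rfl fun k hk => ?_
  have hkn := (mem_Icc.mp hk).2
  have hplus : Complex.exp ((n + k) * x * Complex.I) = Complex.exp (n * x * Complex.I) *
      (Complex.cos (k * x) + Complex.sin (k * x) * Complex.I) := by
    rw [Complex.cos_add_sin_I, ← Complex.exp_add]; ring_nf
  have hminus : Complex.exp (↑(n - k) * x * Complex.I) = Complex.exp (n * x * Complex.I) *
      (Complex.cos (k * x) - Complex.sin (k * x) * Complex.I) := by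
    rw [Complex.cos_sub_sin_I, ← Complex.exp_add]; push_cast [Nat.cast_sub hkn]; ring_nf
  rw [hplus, hminus]
  linear_combination (-Complex.exp (n * x * Complex.I) * b k * Complex.sin (k * x)) * Complex.I_sq

theorem rootMultiplicity_toPoly_pos {x : ℝ} (hp : toPoly n a b ≠ 0) (hx : trigPoly n a b x = 0) :
    0 < (toPoly n a b).rootMultiplicity (Complex.exp (x * Complex.I)) := by
  rw [Polynomial.rootMultiplicity_pos hp, Polynomial.IsRoot, toPoly_eval_exp, hx]
  simp

theorem one_lt_rootMultiplicity_toPoly {x : ℝ} (hp : toPoly n a b ≠ 0)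
    (hx : trigPoly n a b x = 0) (hdx : deriv (trigPoly n a b) x = 0) :
    1 < (toPoly n a b).rootMultiplicity (Complex.exp (x * Complex.I)) := by
  set z := Complex.exp (x * Complex.I)
  have hexp (c : ℂ) : HasDerivAt (fun y : ℝ => Complex.exp (c * y * Complex.I))
      (Complex.exp (c * x * Complex.I) * (c * Complex.I)) x := by
    have := (((hasDerivAt_id (x : ℂ)).const_mul c).mul_const Complex.I).cexp.comp_ofReal
    simpa using this
  have hlhs := ((toPoly n a b).hasDerivAt z).comp x (by simpa using hexp 1)
  have hrhs := (hexp n).mul ((differentiable (n := n) (a := a) (b := b) x).hasDerivAt).ofReal_comp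
  have hfun : (fun y : ℝ => (toPoly n a b).eval (Complex.exp (y * Complex.I))) =
      fun y : ℝ => Complex.exp (n * y * Complex.I) * trigPoly n a b y := funext toPoly_eval_exp
  rw [Function.comp_def, hfun] at hlhs
  -- both sides of `toPoly_eval_exp` differentiated at `x`: the right one vanishes there
  have hderiv := hlhs.unique hrhs
  simp only [hx, hdx, Complex.ofReal_zero, mul_zero, add_zero, mul_eq_zero, Complex.exp_ne_zero,
    Complex.I_ne_zero, or_false] at hderiv
  refine (Polynomial.one_lt_rootMultiplicity_iff_isRoot hp).mpr ⟨?_, hderiv⟩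
  rw [Polynomial.IsRoot, toPoly_eval_exp, hx]
  simp

end trigPoly

theorem deriv_eq_zero_of_abs_le_of_abs_eq {f : ℝ → ℝ} {M x : ℝ} (hf : ∀ y, |f y| ≤ M)
    (hx : |f x| = M) : deriv f x = 0 := by
  rcases abs_choice (f x) with h | h
  · exact IsLocalMax.deriv_eq_zero <| Filter.Eventually.of_forall fun y =>
      (le_abs_self _).trans ((hf y).trans (hx.symm.trans h).le)
  · exact IsLocalMin.deriv_eq_zero <| Filter.Eventually.of_forall fun y => by
      have := neg_abs_le (f y)
      linarith [hf y]

theorem cos_mul_nat_mul_pi_div {n : ℕ} (hn : n ≠ 0) (k : ℕ) : cos (n * (k * π / n)) = (-1) ^ k := by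
  rw [mul_div_cancel₀ _ (by exact_mod_cast hn), cos_nat_mul_pi]

theorem trigPoly.eq_zero_of_alternating {n : ℕ} (hn : n ≠ 0) {a b : ℕ → ℝ}
    (hsign : ∀ k ≤ 2 * n, 0 ≤ (-1) ^ k * trigPoly n a b (k * π / n))
    (hdouble : ∀ k : ℕ, trigPoly n a b (k * π / n) = 0 → deriv (trigPoly n a b) (k * π / n) = 0)
    (h₀ : trigPoly n a b 0 = 0) {x₁ : ℝ} (hx₁ : x₁ ∈ Set.Ioo 0 (π / n))
    (hx₁0 : trigPoly n a b x₁ = 0) (x : ℝ) : trigPoly n a b x = 0 := by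
  suffices hp : toPoly n a b = 0 by
    have h := toPoly_eval_exp (n := n) (a := a) (b := b) x
    rw [hp, Polynomial.eval_zero, zero_eq_mul] at h
    exact_mod_cast h.resolve_left (Complex.exp_ne_zero _)
  by_contra hp
  have ht : StrictMono fun k : ℕ => k * π / n := fun k j hkj => by dsimp only; gcongr
  obtain ⟨S, hS, hcount⟩ := exists_finset_succ_le_sum_of_alternating differentiable.continuous ht
    (by omega : 2 * n ≠ 0) hsign (by simpa using h₀) (by simpa using hx₁) hx₁0
    (fun y => (toPoly n a b).rootMultiplicity (Complex.exp (y * Complex.I)))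
    (fun y hy => rootMultiplicity_toPoly_pos hp hy)
    (fun k hk => one_lt_rootMultiplicity_toPoly hp hk (hdouble k hk))
  have h2π : ((2 * n : ℕ) : ℝ) * π / n = 2 * π := by push_cast; field_simp
  rw [Nat.cast_zero, zero_mul, zero_div, h2π] at hS
  have := (toPoly n a b).sum_rootMultiplicity_exp_mul_I_le_natDegree hS
  have := natDegree_toPoly_le (n := n) (a := a) (b := b)
  omega

theorem trigPoly_eq_mul_cos_of_eq_zero {n : ℕ} (hn : n ≠ 0) {a b : ℕ → ℝ} {M : ℝ}
    (hmax : ∀ x, |trigPoly n a b x| ≤ M) (h₀ : trigPoly n a b 0 = M)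
    (hz : trigPoly n a b (π / (2 * n)) = 0) (x : ℝ) : trigPoly n a b x = M * cos (n * x) := by
  have hM : 0 ≤ M := (abs_nonneg _).trans (hmax 0)
  set A : ℕ → ℝ := Pi.single n M - a
  set B : ℕ → ℝ := 0 - b
  have hR (y : ℝ) : trigPoly n A B y = M * cos (n * y) - trigPoly n a b y := by
    rw [← trigPoly.single_apply hn, trigPoly.sub_apply]
  have hRfun : trigPoly n A B = fun y => M * cos (n * y) - trigPoly n a b y := funext hR
  have hcos_grid (k : ℕ) : M * cos (n * (k * π / n)) = (-1) ^ k * M := by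
    rw [cos_mul_nat_mul_pi_div hn, mul_comm]
  have hcos_le (y : ℝ) : |M * cos (n * y)| ≤ M := by
    rw [abs_mul, abs_of_nonneg hM]
    exact mul_le_of_le_one_right hM (abs_cos_le_one _)
  have habs_grid (k : ℕ) : |(-1) ^ k * M| = M := by simp [abs_of_nonneg hM]
  have hsign (k : ℕ) (_ : k ≤ 2 * n) : 0 ≤ (-1) ^ k * trigPoly n A B (k * π / n) := by
    have := abs_le.mp (hmax (k * π / n))
    rw [hR, hcos_grid]
    rcases neg_one_pow_eq_or ℝ k with h | h <;> rw [h] <;> linarith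
  have hdouble (k : ℕ) (hk : trigPoly n A B (k * π / n) = 0) :
      deriv (trigPoly n A B) (k * π / n) = 0 := by
    rw [hR, hcos_grid, sub_eq_zero] at hk
    rw [hRfun, deriv_fun_sub (by fun_prop) trigPoly.differentiable.differentiableAt,
      deriv_eq_zero_of_abs_le_of_abs_eq hcos_le (by rw [hcos_grid, habs_grid]),
      deriv_eq_zero_of_abs_le_of_abs_eq hmax (by rw [← hk, habs_grid]), sub_zero]
  have hx₁ : π / (2 * n) ∈ Set.Ioo 0 (π / n) := by
    refine ⟨by positivity, ?_⟩
    rw [mul_comm, ← div_div]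
    exact half_lt_self (by positivity)
  have h := trigPoly.eq_zero_of_alternating hn hsign hdouble (by rw [hR, h₀]; simp) hx₁
    (by rw [hR, hz, show (n : ℝ) * (π / (2 * n)) = π / 2 by field_simp, cos_pi_div_two]; ring) x
  linarith [hR x]

theorem trigPoly_eq_mul_cos_of_abs_eq {n : ℕ} (hn : n ≠ 0) {a b : ℕ → ℝ} {M : ℝ}
    (hmax : ∀ x, |trigPoly n a b x| ≤ M) (h₀ : trigPoly n a b 0 = M) {x₀ : ℝ}
    (hx₀ : |x₀| = π / (2 * n)) (hz : trigPoly n a b x₀ = 0) (x : ℝ) :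
    trigPoly n a b x = M * cos (n * x) := by
  rcases abs_choice x₀ with h | h
  · rw [h] at hx₀
    rw [hx₀] at hz
    exact trigPoly_eq_mul_cos_of_eq_zero hn hmax h₀ hz x
  · have hx₀' : x₀ = -(π / (2 * n)) := by linarith
    have h := trigPoly_eq_mul_cos_of_eq_zero (a := a) (b := -b) hn
      (fun y => by rw [← trigPoly.apply_neg]; exact hmax _)
      (by rw [← trigPoly.apply_neg, neg_zero, h₀])
      (by rw [← trigPoly.apply_neg, ← hx₀', hz]) (-x)
    rwa [← trigPoly.apply_neg, neg_neg, mul_neg, cos_neg] at h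

theorem trig_poly_equality_case_general
    (n : ℕ) (hn : 1 ≤ n) (a b : ℕ → ℝ) (M : ℝ)
    (T : ℝ → ℝ)
    (hT : ∀ x, T x = a 0 + ∑ k ∈ Finset.Icc 1 n, (a k * Real.cos (k * x) + b k * Real.sin (k * x)))
    (hM : M = |T 0|)
    (hmax : ∀ x, |T x| ≤ M)
    (x₀ : ℝ) (hx₀ : |x₀| = π / (2 * n)) (hzero : T x₀ = 0) :
    (∀ x, T x = M * Real.cos (n * x)) ∨ (∀ x, T x = -M * Real.cos (n * x)) := by
  obtain rfl : T = trigPoly n a b := funext hT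
  rcases abs_choice (trigPoly n a b 0) with h | h
  · exact Or.inl <| trigPoly_eq_mul_cos_of_abs_eq (by omega) hmax (by rw [hM, h]) hx₀ hzero
  · refine Or.inr fun x => ?_
    have := trigPoly_eq_mul_cos_of_abs_eq (a := -a) (b := -b) (by omega)
      (fun y => by rw [← trigPoly.neg_apply, abs_neg]; exact hmax y)
      (by rw [← trigPoly.neg_apply, hM, h]) hx₀ (by rw [← trigPoly.neg_apply, hzero, neg_zero]) x
    rw [← trigPoly.neg_apply] at this
    linarith

/-- If a trigonometric polynomial `T` of degree `n` attains its maximal absolute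
value `M = |T 0| > 0` at `0`, and has a zero at some `x₀` with `|x₀| = π/(2n)`, then
`T x = ± M cos (n x)` for all `x`. -/
theorem trig_poly_equality_case
    (n : ℕ) (hn : 1 ≤ n) (a b : ℕ → ℝ) (M : ℝ)
    (T : ℝ → ℝ)
    (hT : ∀ x, T x = a 0 + ∑ k ∈ Finset.Icc 1 n, (a k * Real.cos (k * x) + b k * Real.sin (k * x)))
    (hM : M = |T 0|) (hMpos : 0 < M)
    (hmax : ∀ x, |T x| ≤ M)
    (x₀ : ℝ) (hx₀ : |x₀| = π / (2 * n)) (hzero : T x₀ = 0) :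
    (∀ x, T x = M * Real.cos (n * x)) ∨ (∀ x, T x = -M * Real.cos (n * x)) :=
  trig_poly_equality_case_general n hn a b M T hT hM hmax x₀ hx₀ hzero
end

section
/- If a homogeneous polynomial P ∈ ℂ[z₁, z₂] of degree n attains its maximal absolute value on the unit sphere S³ ⊂ ℂ² at a point p, then every point q ∈ S³ with P(q) = 0 satisfies arccos|⟨p,q⟩| ≥ arcsin(1/√n), where ⟨·,·⟩ is the Hermitian inner product. -/
/-!
Write `p = u + v` with `u = ⟪q, p⟫ q` and `v ⊥ q`. By homogeneity, maximality at `p` gives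
`|P x| ≤ M ‖x‖ⁿ` with `M = |P p| > 0`, and `P u = 0`. Schwarz's lemma for the entire function
`w ↦ P (u + w v)`, which vanishes at `0`, on the disc where `‖u + w v‖² < ‖u‖² + r²`, yields
`M ≤ M (‖u‖² + r²)^(n/2) ‖v‖ / r` whenever `‖v‖ < r`. For `r = 1/√n` and `‖v‖² < 1/n` this
contradicts `(1 + x)ⁿ (1 - n x) < 1` at `x = 1/n - ‖v‖²`. Hence `|⟪p, q⟫|² = 1 - ‖v‖² ≤ 1 - 1/n`.
-/

open Real

namespace MvPolynomial

theorem IsHomogeneous.eval_smul {R σ : Type*} [CommSemiring R] {φ : MvPolynomial σ R} {n : ℕ}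
    (hφ : φ.IsHomogeneous n) (c : R) (x : σ → R) :
    eval (c • x) φ = c ^ n * eval x φ := by
  rw [eval_eq, eval_eq, Finset.mul_sum]
  refine Finset.sum_congr rfl fun d hd => ?_
  have hdeg : ∑ i ∈ d.support, d i = n := by
    simpa [Finsupp.weight_apply, Finsupp.sum] using hφ (mem_support_iff.mp hd)
  simp only [Pi.smul_apply, smul_eq_mul, mul_pow, Finset.prod_mul_distrib,
    Finset.prod_pow_eq_pow_sum, hdeg]
  ring

theorem differentiable_eval_euclideanSpace {𝕜 ι : Type*} [RCLike 𝕜] [Fintype ι]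
    (P : MvPolynomial ι 𝕜) : Differentiable 𝕜 fun x : EuclideanSpace 𝕜 ι => eval (fun i => x i) P :=
  fun x => ((AnalyticOnNhd.eval_continuousLinearMap'
    (fun i => PiLp.proj (𝕜 := 𝕜) 2 (fun _ : ι => 𝕜) i) P) x trivial).differentiableAt

end MvPolynomial

theorem one_add_pow_mul_one_sub_lt_one {n : ℕ} (hn : n ≠ 0) {x : ℝ} (hx : 0 < x) :
    (1 + x) ^ n * (1 - n * x) < 1 := by
  rcases le_or_gt (1 - n * x) 0 with hneg | hpos
  · nlinarith [pow_pos (by linarith : (0 : ℝ) < 1 + x) n]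
  have hnx : (n : ℝ) * x ≠ 0 := by positivity
  calc (1 + x) ^ n * (1 - n * x) < exp x ^ n * exp (-(n * x)) := by
        gcongr
        · linarith [add_one_lt_exp hx.ne']
        · linarith [add_one_lt_exp (neg_ne_zero.mpr hnx)]
    _ = 1 := by rw [← exp_nat_mul, ← exp_add, add_neg_cancel, exp_zero]

theorem sqrt_one_sub_sq_add_inv_pow_mul_lt_inv_sqrt {n : ℕ} (hn : n ≠ 0) {b : ℝ}
    (hbn : b ^ 2 < (n : ℝ)⁻¹) :
    √(1 - b ^ 2 + (n : ℝ)⁻¹) ^ n * b < (√n)⁻¹ := by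
  have hn' : (0 : ℝ) < n := by positivity
  set x := (n : ℝ)⁻¹ - b ^ 2
  have hx : 0 < x := by linarith
  rw [show 1 - b ^ 2 + (n : ℝ)⁻¹ = 1 + x by ring]
  refine lt_of_pow_lt_pow_left₀ 2 (by positivity) ?_
  rw [mul_pow, ← pow_mul, mul_comm n, pow_mul, sq_sqrt (by positivity), inv_pow, sq_sqrt hn'.le,
    show b ^ 2 = (1 - n * x) * (n : ℝ)⁻¹ by simp only [x]; field_simp; ring, ← mul_assoc]
  exact mul_lt_of_lt_one_left (inv_pos.mpr hn') (one_add_pow_mul_one_sub_lt_one hn hx)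

theorem Real.arcsin_le_arccos_of_sq_add_sq_le {s c : ℝ} (hc : 0 ≤ c) (h : s ^ 2 + c ^ 2 ≤ 1) :
    arcsin s ≤ arccos c := by
  rw [arccos_eq_arcsin hc]
  exact monotone_arcsin ((le_abs_self s).trans (abs_le_sqrt (by linarith)))

section

variable {E : Type*} [NormedAddCommGroup E] {F : E → ℂ} {n : ℕ} {M : ℝ}

theorem norm_le_mul_norm_pow_of_homogeneous [NormedSpace ℂ E]
    (hF : ∀ (c : ℂ) x, F (c • x) = c ^ n * F x) (hn : n ≠ 0)
    (hM : ∀ u : E, ‖u‖ = 1 → ‖F u‖ ≤ M) (x : E) : ‖F x‖ ≤ M * ‖x‖ ^ n := by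
  rcases eq_or_ne x 0 with rfl | hx
  · simpa [zero_pow hn] using hF 0 (0 : E)
  have hx' : ((‖x‖ : ℝ) : ℂ) ≠ 0 := by exact_mod_cast norm_ne_zero_iff.mpr hx
  calc ‖F x‖ = ‖F ((‖x‖ : ℂ) • ((‖x‖ : ℂ)⁻¹ • x))‖ := by rw [smul_inv_smul₀ hx']
    _ = ‖x‖ ^ n * ‖F ((‖x‖ : ℂ)⁻¹ • x)‖ := by
      rw [hF, norm_mul, norm_pow, Complex.norm_real, norm_norm]
    _ ≤ ‖x‖ ^ n * M := by gcongr; exact hM _ (norm_smul_inv_norm hx)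
    _ = M * ‖x‖ ^ n := mul_comm _ _

theorem norm_apply_add_le_of_inner_eq_zero [InnerProductSpace ℂ E] (hF : Differentiable ℂ F)
    (hgrowth : ∀ x, ‖F x‖ ≤ M * ‖x‖ ^ n) {u v : E} (hu : F u = 0) (huv : inner ℂ u v = 0)
    {r : ℝ} (hvr : ‖v‖ < r) :
    ‖F (u + v)‖ ≤ M * √(‖u‖ ^ 2 + r ^ 2) ^ n / r * ‖v‖ := by
  rcases eq_or_ne v 0 with rfl | hv
  · simp [hu]
  have hv' : 0 < ‖v‖ := norm_pos_iff.mpr hv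
  have hM : 0 ≤ M := nonneg_of_mul_nonneg_left ((norm_nonneg _).trans (hgrowth v)) (by positivity)
  have hline : ∀ w : ℂ, ‖u + w • v‖ ^ 2 = ‖u‖ ^ 2 + ‖w‖ ^ 2 * ‖v‖ ^ 2 := fun w => by
    have h := norm_add_sq_eq_norm_sq_add_norm_sq_of_inner_eq_zero u (w • v)
      (by rw [inner_smul_right, huv, mul_zero])
    rw [norm_smul] at h
    linear_combination h
  have hmaps : Set.MapsTo (fun w : ℂ => F (u + w • v)) (Metric.ball 0 (r / ‖v‖))
      (Metric.closedBall (F (u + (0 : ℂ) • v)) (M * √(‖u‖ ^ 2 + r ^ 2) ^ n)) := by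
    intro w hw
    rw [mem_ball_zero_iff, lt_div_iff₀ hv'] at hw
    rw [zero_smul, add_zero, hu, mem_closedBall_zero_iff]
    refine (hgrowth _).trans (by
      gcongr
      refine le_sqrt_of_sq_le ?_
      rw [hline, ← mul_pow]
      nlinarith [pow_lt_pow_left₀ hw (by positivity) two_ne_zero])
  have := Complex.dist_le_div_mul_dist_of_mapsTo_ball
    (hF.comp ((differentiable_const u).add (differentiable_id.smul_const v))).differentiableOn hmaps
    (mem_ball_zero_iff.mpr (by rw [norm_one, one_lt_div hv']; exact hvr))
  simp only [Function.comp_apply, Pi.add_apply, one_smul, zero_smul, add_zero, hu,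
    dist_zero_right, norm_one, mul_one] at this
  rwa [div_div_eq_mul_div, mul_div_right_comm] at this

theorem norm_inner_sq_le_one_sub_inv_of_homogeneous [InnerProductSpace ℂ E]
    (hF : Differentiable ℂ F) (hhom : ∀ (c : ℂ) x, F (c • x) = c ^ n * F x) (hn : n ≠ 0)
    {p q : E} (hp : ‖p‖ = 1) (hmax : ∀ x : E, ‖x‖ = 1 → ‖F x‖ ≤ ‖F p‖) (hp0 : F p ≠ 0)
    (hq : ‖q‖ = 1) (hq0 : F q = 0) :
    ‖inner ℂ p q‖ ^ 2 ≤ 1 - (n : ℝ)⁻¹ := by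
  set u := inner ℂ q p • q
  set v := p - u
  have huv : inner ℂ u v = 0 := by
    rw [inner_smul_left, inner_sub_right, inner_smul_right, inner_self_eq_norm_sq_to_K, hq]
    simp
  have hu : ‖u‖ = ‖inner ℂ p q‖ := by rw [norm_smul, hq, mul_one, norm_inner_symm]
  have hpyth : ‖u‖ ^ 2 + ‖v‖ ^ 2 = 1 := by
    have h := norm_add_sq_eq_norm_sq_add_norm_sq_of_inner_eq_zero u v huv
    rw [add_sub_cancel, hp] at h
    linear_combination -h
  by_contra! h
  -- the radius minimising the Schwarz bound when `‖v‖² = 1/n`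
  set r : ℝ := (√n)⁻¹
  have hv2 : ‖v‖ ^ 2 < (n : ℝ)⁻¹ := by rw [← hu] at h; linarith
  have hr2 : r ^ 2 = (n : ℝ)⁻¹ := by rw [inv_pow, sq_sqrt n.cast_nonneg]
  have hvr : ‖v‖ < r := lt_of_pow_lt_pow_left₀ 2 (by positivity) (hr2 ▸ hv2)
  have hbound := norm_apply_add_le_of_inner_eq_zero hF
    (norm_le_mul_norm_pow_of_homogeneous hhom hn hmax) (by rw [hhom, hq0, mul_zero]) huv hvr
  rw [add_sub_cancel, hr2, show ‖u‖ ^ 2 = 1 - ‖v‖ ^ 2 by linarith] at hbound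
  have hratio : √(1 - ‖v‖ ^ 2 + (n : ℝ)⁻¹) ^ n * ‖v‖ / r < 1 :=
    (div_lt_one (by positivity)).mpr (sqrt_one_sub_sq_add_inv_pow_mul_lt_inv_sqrt hn hv2)
  have := mul_lt_mul_of_pos_left hratio (norm_pos_iff.mpr hp0)
  linarith [show ‖F p‖ * √(1 - ‖v‖ ^ 2 + (n : ℝ)⁻¹) ^ n / r * ‖v‖
    = ‖F p‖ * (√(1 - ‖v‖ ^ 2 + (n : ℝ)⁻¹) ^ n * ‖v‖ / r) by ring]

end

/-- If a nonzero homogeneous polynomial `P ∈ ℂ[z₁, z₂]` of degree `n ≥ 1` attains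
its maximal absolute value on the unit sphere `S³ ⊂ ℂ²` at `p`, then every zero `q ∈ S³` of `P`
satisfies `arccos |⟨p,q⟩| ≥ arcsin (1/√n)`. -/
theorem complex_sphere_polynomial_zero_avoidance_dim2
    (n : ℕ) (hn : 1 ≤ n) (P : MvPolynomial (Fin 2) ℂ)
    (hhom : P.IsHomogeneous n) (hP : P ≠ 0)
    (p : EuclideanSpace ℂ (Fin 2)) (hp : ‖p‖ = 1)
    (hmax : ∀ x : EuclideanSpace ℂ (Fin 2), ‖x‖ = 1 →
      ‖MvPolynomial.eval (fun i => x i) P‖ ≤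
        ‖MvPolynomial.eval (fun i => p i) P‖) :
    ∀ q : EuclideanSpace ℂ (Fin 2), ‖q‖ = 1 → MvPolynomial.eval (fun i => q i) P = 0 →
      Real.arccos ‖(inner ℂ p q : ℂ)‖ ≥ Real.arcsin (1 / Real.sqrt n) := by
  intro q hq hq0
  set F : EuclideanSpace ℂ (Fin 2) → ℂ := fun x => MvPolynomial.eval (fun i => x i) P
  have hn0 : n ≠ 0 := by omega
  have hFhom : ∀ (c : ℂ) x, F (c • x) = c ^ n * F x := fun c x => hhom.eval_smul c _
  -- a zero maximum on the sphere forces `P` to vanish on all of `ℂ²`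
  have hp0 : F p ≠ 0 := fun h0 => hP <| MvPolynomial.funext fun x => by
    simpa [F, h0] using norm_le_mul_norm_pow_of_homogeneous hFhom hn0 hmax (WithLp.toLp 2 x)
  have hkey := norm_inner_sq_le_one_sub_inv_of_homogeneous
    (MvPolynomial.differentiable_eval_euclideanSpace P) hFhom hn0 hp hmax hp0 hq hq0
  refine arcsin_le_arccos_of_sq_add_sq_le (norm_nonneg _) ?_
  rw [div_pow, one_pow, sq_sqrt n.cast_nonneg, one_div]
  linarith
end

section
/- Let P ∈ ℂ[z₁,…,z_d] be a homogeneous polynomial of degree n ≥ 1, not identically zero, attaining its maximal absolute value on the unit sphere S^{2d-1} ⊂ ℂ^d at a point p. Then every q ∈ S^{2d-1} with P(q) = 0 satisfies arccos|⟨p,q⟩| ≥ arcsin(1/√n). -/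
/-!
Let `α = ⟨q, p⟩` and restrict `P` to the complex line `z ↦ q + z u` through `q` and `α⁻¹ p`,
where `u ⊥ q` is a unit vector. By homogeneity and maximality, `g z = P (q + z u)` satisfies
`‖g z‖² ≤ M² (1 + ‖z‖²)ⁿ` with `M = ‖P p‖`, with equality at the point `z₀` of the line lying on
`ℂ p`, and `g 0 = 0`. Along the ray through `z₀`, `‖g‖²` stays below the barrier `M² (1 + s²)ⁿ`
and, by the Schwarz lemma, below the parabola `M² (1 + ‖z₀‖²)ⁿ s² / ‖z₀‖²` for `s < ‖z₀‖`; it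
touches both at `s = ‖z₀‖`. Comparing the slopes of the two barriers there gives
`1 + ‖z₀‖² ≤ n ‖z₀‖²`, that is `‖α‖² ≤ 1 - 1/n`, which is `arccos ‖α‖ ≥ arcsin (1/√n)`.
-/

open Real Set Filter Topology Metric
open scoped InnerProductSpace

theorem MvPolynomial.IsHomogeneous.eval_smul_s9 {σ R : Type*} [CommSemiring R]
    {P : MvPolynomial σ R} {n : ℕ} (hP : P.IsHomogeneous n) (c : R) (x : σ → R) :
    MvPolynomial.eval (c • x) P = c ^ n * MvPolynomial.eval x P := by
  simp only [MvPolynomial.eval_eq, Finset.mul_sum]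
  refine Finset.sum_congr rfl fun m hm => ?_
  rw [Pi.smul_def]
  simp only [smul_eq_mul, mul_pow, Finset.prod_mul_distrib, Finset.prod_pow_eq_pow_sum,
    ← hP.degree_eq_sum_deg_support hm]
  ring

theorem MvPolynomial.differentiable_eval_euclidean {ι : Type*} [Fintype ι]
    (P : MvPolynomial ι ℂ) :
    Differentiable ℂ fun x : EuclideanSpace ℂ ι => MvPolynomial.eval (fun i => x i) P := by
  have := AnalyticOnNhd.eval_continuousLinearMap' (fun i => EuclideanSpace.proj (𝕜 := ℂ) i) P
  exact fun x => (this x trivial).differentiableAt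

theorem HasDerivAt.le_of_eventually_le_nhdsLT {f g : ℝ → ℝ} {f' g' x : ℝ}
    (hf : HasDerivAt f f' x) (hg : HasDerivAt g g' x) (hle : ∀ᶠ y in 𝓝[<] x, f y ≤ g y)
    (hx : f x = g x) : g' ≤ f' := by
  have hslope := (hg.sub hf).tendsto_slope.mono_left (nhdsLT_le_nhdsNE x)
  refine sub_nonpos.mp (le_of_tendsto hslope ?_)
  filter_upwards [hle, self_mem_nhdsWithin] with y hy hyx
  rw [slope_def_field]
  exact div_nonpos_of_nonneg_of_nonpos (by simp only [Pi.sub_apply, hx]; linarith)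
    (by linarith [mem_Iio.mp hyx])

theorem le_of_touching_barriers {η A B : ℝ → ℝ} {a b R : ℝ} (hη : DifferentiableAt ℝ η R)
    (hA : HasDerivAt A a R) (hB : HasDerivAt B b R) (hηA : ∀ᶠ s in 𝓝 R, η s ≤ A s)
    (hηB : ∀ᶠ s in 𝓝[<] R, η s ≤ B s) (hAR : η R = A R) (hBR : η R = B R) : b ≤ a := by
  have hmax : IsLocalMax (fun s => η s - A s) R := by
    filter_upwards [hηA] with s hs
    linarith
  have hderiv : deriv η R = a := by
    linarith [hmax.hasDerivAt_eq_zero (hη.hasDerivAt.sub hA)]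
  exact hderiv ▸ hη.hasDerivAt.le_of_eventually_le_nhdsLT hB hηB hBR

theorem norm_sq_le_div_mul_norm_sq_of_forall_norm_eq {g : ℂ → ℂ} (hg : Differentiable ℂ g)
    (hg0 : g 0 = 0) {R L : ℝ} (hR : 0 < R) (hL : ∀ z, ‖z‖ = R → ‖g z‖ ^ 2 ≤ L) {z : ℂ}
    (hz : ‖z‖ < R) : ‖g z‖ ^ 2 ≤ L / R ^ 2 * ‖z‖ ^ 2 := by
  have hL0 : 0 ≤ L := (sq_nonneg _).trans (hL R (by simp [hR.le]))
  have hmaps : MapsTo g (ball 0 R) (closedBall (g 0) √L) := by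
    intro w hw
    rw [hg0, mem_closedBall_zero_iff]
    refine Complex.norm_le_of_forall_mem_frontier_norm_le isBounded_ball hg.diffContOnCl
      (fun w hw => ?_) (subset_closure hw)
    rw [frontier_ball (0 : ℂ) hR.ne', mem_sphere_zero_iff_norm] at hw
    exact (le_sqrt (norm_nonneg _) hL0).mpr (hL w hw)
  have hschwarz := Complex.dist_le_div_mul_dist_of_mapsTo_ball hg.differentiableOn hmaps
    (mem_ball_zero_iff.mpr hz)
  rw [hg0, dist_zero_right, dist_zero_right] at hschwarz
  calc ‖g z‖ ^ 2 ≤ (√L / R * ‖z‖) ^ 2 := by gcongr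
    _ = L / R ^ 2 * ‖z‖ ^ 2 := by rw [div_mul_eq_mul_div, div_pow, mul_pow, sq_sqrt hL0]; ring

theorem one_add_norm_sq_le_of_norm_sq_eq_bound {g : ℂ → ℂ} (hg : Differentiable ℂ g)
    (hg0 : g 0 = 0) {K : ℝ} (hK : 0 < K) {n : ℕ}
    (hbound : ∀ z, ‖g z‖ ^ 2 ≤ K * (1 + ‖z‖ ^ 2) ^ n) {z₀ : ℂ}
    (heq : ‖g z₀‖ ^ 2 = K * (1 + ‖z₀‖ ^ 2) ^ n) : 1 + ‖z₀‖ ^ 2 ≤ n * ‖z₀‖ ^ 2 := by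
  have hz₀ : z₀ ≠ 0 := by
    rintro rfl
    norm_num [hg0] at heq
    linarith
  set R := ‖z₀‖
  have hR : 0 < R := norm_pos_iff.mpr hz₀
  set e : ℂ := z₀ / R
  have he : ‖e‖ = 1 := by rw [norm_div, Complex.norm_real, norm_of_nonneg hR.le, div_self hR.ne']
  set η : ℝ → ℝ := fun s => ‖g (s * e)‖ ^ 2
  set L := K * (1 + R ^ 2) ^ n
  have hηR : η R = L := by
    simp only [η, e, mul_div_cancel₀ _ (Complex.ofReal_ne_zero.mpr hR.ne'), heq, L]
  have hupper : ∀ s, η s ≤ K * (1 + s ^ 2) ^ n := fun s => by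
    simpa [η, he] using hbound (s * e)
  have hlower : ∀ s ∈ Ioo 0 R, η s ≤ L / R ^ 2 * s ^ 2 := fun s hs => by
    have hsR : ‖(s : ℂ) * e‖ = s := by simp [he, hs.1.le]
    have h := norm_sq_le_div_mul_norm_sq_of_forall_norm_eq hg hg0 hR
      (fun z hz => by simpa [hz] using hbound z) (hsR.trans_lt hs.2)
    rwa [hsR] at h
  have hη : DifferentiableAt ℝ η R := by
    have hline : Differentiable ℝ fun s : ℝ => g (s * e) :=
      (hg.restrictScalars ℝ).comp (by fun_prop)
    exact (hline R).norm_sq ℝ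
  have hdA : HasDerivAt (fun s : ℝ => K * (1 + s ^ 2) ^ n)
      (K * (n * (1 + R ^ 2) ^ (n - 1) * (2 * R))) R := by
    simpa using ((hasDerivAt_pow 2 R).const_add 1).pow n |>.const_mul K
  have hdB : HasDerivAt (fun s : ℝ => L / R ^ 2 * s ^ 2) (L / R ^ 2 * (2 * R)) R := by
    simpa using (hasDerivAt_pow 2 R).const_mul (L / R ^ 2)
  have hslopes := le_of_touching_barriers hη hdA hdB (.of_forall hupper)
    (by filter_upwards [Ioo_mem_nhdsLT hR] using hlower) hηR (by rw [hηR]; field_simp)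
  refine le_of_mul_le_mul_left ?_ (by positivity : 0 < 2 * L / R)
  calc 2 * L / R * (1 + R ^ 2) = L / R ^ 2 * (2 * R) * (1 + R ^ 2) := by field_simp
    _ ≤ K * (n * (1 + R ^ 2) ^ (n - 1) * (2 * R)) * (1 + R ^ 2) := by gcongr
    _ = 2 * L / R * (n * R ^ 2) := by
      rcases n with _ | m
      · simp
      · simp only [L, Nat.add_sub_cancel, pow_succ]; field_simp

section Homogeneous

variable {E : Type*} [NormedAddCommGroup E] {f : E → ℂ} {n : ℕ}

theorem norm_apply_le_of_homogeneous [NormedSpace ℂ E]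
    (hf : ∀ (c : ℂ) x, f (c • x) = c ^ n * f x) {M : ℝ} (hM : ∀ x, ‖x‖ = 1 → ‖f x‖ ≤ M)
    {x : E} (hx : x ≠ 0) : ‖f x‖ ≤ M * ‖x‖ ^ n := by
  have hx' : (‖x‖ : ℂ) ≠ 0 := Complex.ofReal_ne_zero.mpr (norm_ne_zero_iff.mpr hx)
  calc ‖f x‖ = ‖f ((‖x‖ : ℂ) • ((‖x‖⁻¹ : ℂ) • x))‖ := by rw [smul_inv_smul₀ hx']
    _ = ‖f ((‖x‖⁻¹ : ℂ) • x)‖ * ‖x‖ ^ n := by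
      rw [hf, norm_mul, norm_pow, Complex.norm_real, norm_norm, mul_comm]
    _ ≤ M * ‖x‖ ^ n := by gcongr; exact hM _ (norm_smul_inv_norm hx)

theorem apply_ne_zero_of_norm_le_on_sphere [NormedSpace ℂ E]
    (hf : ∀ (c : ℂ) x, f (c • x) = c ^ n * f x) {p : E}
    (hmax : ∀ x, ‖x‖ = 1 → ‖f x‖ ≤ ‖f p‖) {x : E} (hx : f x ≠ 0) : f p ≠ 0 := by
  intro hp0
  rcases eq_or_ne x 0 with rfl | hx0
  · exact hx (by rw [← zero_smul ℂ p, hf, hp0, mul_zero])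
  · have := norm_apply_le_of_homogeneous hf hmax hx0
    rw [hp0, norm_zero, zero_mul] at this
    exact hx (norm_le_zero_iff.mp this)

theorem exists_add_smul_eq_of_inner_eq_one [InnerProductSpace ℂ E] {q v : E} (hq : ‖q‖ = 1)
    (hqv : ⟪q, v⟫_ℂ = 1) (hv : v ≠ q) :
    ∃ (u : E) (z : ℂ), ‖u‖ = 1 ∧ ⟪q, u⟫_ℂ = 0 ∧ q + z • u = v := by
  have hw : v - q ≠ 0 := sub_ne_zero.mpr hv
  have hqw : ⟪q, v - q⟫_ℂ = 0 := by
    rw [inner_sub_right, hqv, inner_self_eq_norm_sq_to_K, hq]; norm_num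
  refine ⟨(‖v - q‖⁻¹ : ℂ) • (v - q), ‖v - q‖, norm_smul_inv_norm hw,
    by rw [inner_smul_right, hqw, mul_zero], ?_⟩
  rw [smul_inv_smul₀ (Complex.ofReal_ne_zero.mpr (norm_ne_zero_iff.mpr hw)), add_sub_cancel]

theorem one_le_mul_one_sub_norm_inner_sq [InnerProductSpace ℂ E] (hfd : Differentiable ℂ f)
    (hf : ∀ (c : ℂ) x, f (c • x) = c ^ n * f x) {p q : E} (hp : ‖p‖ = 1)
    (hmax : ∀ x, ‖x‖ = 1 → ‖f x‖ ≤ ‖f p‖) (hfp : f p ≠ 0) (hq : ‖q‖ = 1) (hfq : f q = 0) :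
    1 ≤ n * (1 - ‖⟪p, q⟫_ℂ‖ ^ 2) := by
  rw [← inner_conj_symm, Complex.norm_conj]
  set α := ⟪q, p⟫_ℂ
  rcases eq_or_ne α 0 with hα | hα
  · -- a homogeneous function of degree 0 is constant
    have hn : n ≠ 0 := by
      rintro rfl
      have hconst : ∀ x, f x = f 0 := fun x => by simpa using (hf 0 x).symm
      exact hfp (by rw [hconst, ← hconst q, hfq])
    simpa [hα] using Nat.one_le_iff_ne_zero.mpr hn
  have hv : α⁻¹ • p ≠ q := fun h => hfp (by rw [← smul_inv_smul₀ hα p, h, hf, hfq, mul_zero])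
  obtain ⟨u, z₀, hu, hqu, hz₀⟩ :=
    exists_add_smul_eq_of_inner_eq_one hq (by rw [inner_smul_right, inv_mul_cancel₀ hα]) hv
  have hline : ∀ z : ℂ, ‖q + z • u‖ ^ 2 = 1 + ‖z‖ ^ 2 := fun z => by
    rw [norm_add_sq (𝕜 := ℂ), inner_smul_right, hqu, mul_zero, map_zero, hq, norm_smul, hu]
    ring
  have hbound : ∀ z : ℂ, ‖f (q + z • u)‖ ^ 2 ≤ ‖f p‖ ^ 2 * (1 + ‖z‖ ^ 2) ^ n := fun z => by
    have hz : q + z • u ≠ 0 := by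
      rw [← norm_ne_zero_iff]; intro h0; nlinarith [hline z, sq_nonneg ‖z‖]
    calc ‖f (q + z • u)‖ ^ 2 ≤ (‖f p‖ * ‖q + z • u‖ ^ n) ^ 2 := by
          gcongr; exact norm_apply_le_of_homogeneous hf hmax hz
      _ = ‖f p‖ ^ 2 * (1 + ‖z‖ ^ 2) ^ n := by rw [← hline]; ring
  have heq : ‖f (q + z₀ • u)‖ ^ 2 = ‖f p‖ ^ 2 * (1 + ‖z₀‖ ^ 2) ^ n := by
    rw [← hline, hz₀, hf, norm_smul, hp, norm_mul, norm_pow]; ring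
  have key := one_add_norm_sq_le_of_norm_sq_eq_bound (hfd.comp (by fun_prop))
    (by simpa using hfq) (by positivity) hbound heq
  have hα' : ‖α‖ ^ 2 * (1 + ‖z₀‖ ^ 2) = 1 := by
    rw [← hline, hz₀, norm_smul, hp, norm_inv]; field_simp
  nlinarith [sq_nonneg ‖α‖]

end Homogeneous

theorem Real.arcsin_one_div_sqrt_le_arccos {n : ℕ} {a : ℝ} (ha : 0 ≤ a)
    (h : 1 ≤ n * (1 - a ^ 2)) : arcsin (1 / √n) ≤ arccos a := by
  have hn : (0 : ℝ) < n := by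
    by_contra! h0; nlinarith [sq_nonneg a, Nat.cast_nonneg (α := ℝ) n]
  rw [arccos_eq_arcsin ha, one_div, ← sqrt_inv]
  refine monotone_arcsin (sqrt_le_sqrt ?_)
  rw [inv_le_iff_one_le_mul₀' hn]; exact h

theorem complex_sphere_polynomial_zero_avoidance_general
    (d n : ℕ) (P : MvPolynomial (Fin d) ℂ)
    (hhom : P.IsHomogeneous n) (hP : P ≠ 0)
    (p : EuclideanSpace ℂ (Fin d)) (hp : ‖p‖ = 1)
    (hmax : ∀ x : EuclideanSpace ℂ (Fin d), ‖x‖ = 1 →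
      ‖MvPolynomial.eval (fun i => x i) P‖ ≤
        ‖MvPolynomial.eval (fun i => p i) P‖) :
    ∀ q : EuclideanSpace ℂ (Fin d), ‖q‖ = 1 → MvPolynomial.eval (fun i => q i) P = 0 →
      Real.arccos ‖(inner ℂ p q : ℂ)‖ ≥ Real.arcsin (1 / Real.sqrt n) := by
  intro q hq hq0
  set f : EuclideanSpace ℂ (Fin d) → ℂ := fun x => MvPolynomial.eval (fun i => x i) P
  have hf : ∀ (c : ℂ) x, f (c • x) = c ^ n * f x := fun c x => hhom.eval_smul_s9 c _
  obtain ⟨x, hx⟩ : ∃ x : Fin d → ℂ, MvPolynomial.eval x P ≠ 0 := by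
    by_contra! h
    exact hP (MvPolynomial.funext fun x => by simp [h x])
  have hfp : f p ≠ 0 := apply_ne_zero_of_norm_le_on_sphere hf hmax (x := WithLp.toLp 2 x) hx
  exact Real.arcsin_one_div_sqrt_le_arccos (norm_nonneg _) <|
    one_le_mul_one_sub_norm_inner_sq (MvPolynomial.differentiable_eval_euclidean P) hf hp hmax
      hfp hq hq0

/-- If a nonzero homogeneous polynomial `P ∈ ℂ[z₁, …, z_d]` of degree `n ≥ 1`
attains its maximal absolute value on the unit sphere `S^{2d-1} ⊂ ℂ^d` at `p`, then every zero
`q` of `P` on the sphere satisfies `arccos |⟨p,q⟩| ≥ arcsin (1/√n)`. -/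
theorem complex_sphere_polynomial_zero_avoidance
    (d n : ℕ) (hn : 1 ≤ n) (P : MvPolynomial (Fin d) ℂ)
    (hhom : P.IsHomogeneous n) (hP : P ≠ 0)
    (p : EuclideanSpace ℂ (Fin d)) (hp : ‖p‖ = 1)
    (hmax : ∀ x : EuclideanSpace ℂ (Fin d), ‖x‖ = 1 →
      ‖MvPolynomial.eval (fun i => x i) P‖ ≤
        ‖MvPolynomial.eval (fun i => p i) P‖) :
    ∀ q : EuclideanSpace ℂ (Fin d), ‖q‖ = 1 → MvPolynomial.eval (fun i => q i) P = 0 →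
      Real.arccos ‖(inner ℂ p q : ℂ)‖ ≥ Real.arcsin (1 / Real.sqrt n) :=
  complex_sphere_polynomial_zero_avoidance_general d n P hhom hP p hp hmax
end

section
/- The sequence of rescaled Chebyshev polynomials x ↦ (-1)^k T_{2k}(x/(2k)) converges to cos(x) uniformly on every compact subset of ℝ, where T_n is the Chebyshev polynomial of the first kind. -/
/-!
Substituting `t = sin y` into `T_{2k}(cos (π/2 - y)) = cos (kπ - 2ky)` gives
`(-1)^k T_{2k}(t) = cos (2k arcsin t)` for `|t| ≤ 1`, so once `|x| ≤ 2k` the `k`-th term is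
`cos (2k arcsin (x / 2k))`. Since `arcsin' 0 = 1`, `r arcsin (x / r) → x` uniformly on bounded
sets, and `cos` is `1`-Lipschitz.
-/

open Real Polynomial Chebyshev Filter

theorem Polynomial.Chebyshev.T_two_mul_real_sin (y : ℝ) (k : ℕ) :
    (T ℝ (2 * k)).eval (sin y) = (-1) ^ k * cos (2 * k * y) := by
  rw [← cos_pi_div_two_sub, T_real_cos, ← cos_nat_mul_pi_sub]
  push_cast
  ring_nf

theorem Polynomial.Chebyshev.neg_one_pow_mul_T_two_mul_eval {t : ℝ} (ht : |t| ≤ 1) (k : ℕ) :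
    (-1) ^ k * (T ℝ (2 * k)).eval t = cos (2 * k * arcsin t) := by
  obtain ⟨ht₁, ht₂⟩ := abs_le.1 ht
  rw [← sin_arcsin ht₁ ht₂, T_two_mul_real_sin, sin_arcsin ht₁ ht₂, ← mul_assoc, ← mul_pow]
  norm_num

theorem HasDerivAt.tendstoUniformlyOn_mul_comp_div {E : Type*} [NormedAddCommGroup E]
    [NormedSpace ℝ E] {f : ℝ → E} {f' : E} (hf : HasDerivAt f f' 0) (hf₀ : f 0 = 0)
    {K : Set ℝ} (hK : Bornology.IsBounded K) :
    TendstoUniformlyOn (fun r x => r • f (x / r)) (fun x => x • f') atTop K := by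
  obtain ⟨M, hM₀, hM⟩ := hK.exists_pos_norm_le
  rw [Metric.tendstoUniformlyOn_iff]
  intro ε hε
  have hlo := (hasDerivAt_iff_isLittleO_nhds_zero.1 hf).def (div_pos hε (mul_pos two_pos hM₀))
  obtain ⟨δ, hδ, hball⟩ := Metric.eventually_nhds_iff.1 hlo
  filter_upwards [eventually_gt_atTop (M / δ), eventually_gt_atTop 0] with r hrM hr x hx
  have hxr : dist (x / r) 0 < δ := by
    rw [dist_zero_right, norm_div, Real.norm_of_nonneg hr.le, div_lt_iff₀ hr]
    rw [div_lt_iff₀ hδ] at hrM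
    linarith [hM x hx]
  have hsmall := hball hxr
  simp only [zero_add, hf₀, sub_zero] at hsmall
  calc dist (x • f') (r • f (x / r)) = ‖r • (f (x / r) - (x / r) • f')‖ := by
        rw [dist_comm, dist_eq_norm, smul_sub, smul_smul, mul_div_cancel₀ x hr.ne']
    _ = r * ‖f (x / r) - (x / r) • f'‖ := by rw [norm_smul, Real.norm_of_nonneg hr.le]
    _ ≤ r * (ε / (2 * M) * ‖x / r‖) := by gcongr
    _ = ε / (2 * M) * ‖x‖ := by
        rw [norm_div, Real.norm_of_nonneg hr.le]; field_simp
    _ ≤ ε / (2 * M) * M := by gcongr; exact hM x hx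
    _ < ε := by field_simp; linarith

theorem tendstoUniformlyOn_cos_mul_arcsin_div {K : Set ℝ} (hK : Bornology.IsBounded K) :
    TendstoUniformlyOn (fun r x => cos (r * arcsin (x / r))) cos atTop K := by
  have hderiv : HasDerivAt arcsin 1 0 := by
    simpa using hasDerivAt_arcsin (x := 0) (by norm_num) (by norm_num)
  simpa [Function.comp_def] using lipschitzWith_cos.uniformContinuous.comp_tendstoUniformlyOn
    (hderiv.tendstoUniformlyOn_mul_comp_div arcsin_zero hK)

/-- The rescaled Chebyshev polynomials `(-1)^k T_{2k}(x/(2k))` converge to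
`cos x` uniformly on every compact subset of `ℝ`. -/
theorem chebyshev_even_tendsto_cos (K : Set ℝ) (hK : IsCompact K) :
    TendstoUniformlyOn
      (fun (k : ℕ) (x : ℝ) =>
        (-1 : ℝ) ^ k * (Polynomial.Chebyshev.T ℝ (2 * k)).eval (x / (2 * k)))
      Real.cos Filter.atTop K := by
  obtain ⟨M, hM⟩ := hK.isBounded.exists_norm_le
  have htwo : Tendsto (fun k : ℕ => 2 * (k : ℝ)) atTop atTop :=
    tendsto_natCast_atTop_atTop.const_mul_atTop two_pos
  refine ((tendstoUniformlyOn_cos_mul_arcsin_div hK.isBounded).seq_tendstoUniformlyOn _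
    htwo).congr ?_
  filter_upwards [htwo.eventually (eventually_ge_atTop M), htwo.eventually (eventually_gt_atTop 0)]
    with k hkM hk x hx
  have hxk : |x / (2 * k)| ≤ 1 := by
    rw [abs_div, abs_of_pos hk, div_le_one hk]
    exact (hM x hx).trans hkM
  exact (neg_one_pow_mul_T_two_mul_eval hxk k).symm
end

section
/- Let Q ∈ ℂ[z] be a polynomial with Q(0) ≠ 0, let n ≥ 1 and D ≤ n, and define F(z) = |z Q(z)| (1 + |z|²)^{-n/2} on ℂ. If F attains its maximum on ℂ at a point a > 0 real, then a² ≥ 1/(n-1) (when n ≥ 2). -/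
open Real

/-! On `|z| = r` we have `F(z) = ρ(r) |Q(z)|` with `ρ(r) = r (1 + r²)^{-n/2}`, and
`ρ'(r) = (1 + r²)^{-n/2-1} (1 - (n-1) r²)`, so `ρ` increases strictly while `(n-1) r² ≤ 1`.
If the maximum point `w` had `(n-1)|w|² < 1`, pick `r > |w|` still in that range: by the maximum
modulus principle some `z` with `|z| = r` has `|Q(z)| ≥ |Q(w)|`, hence `F(z) > F(w)`. Here
`Q(w) ≠ 0`, for otherwise `F ≡ 0`, so `Q` vanishes off `0` and by continuity `Q(0) = 0`. -/

noncomputable def radialWeight (n : ℕ) (r : ℝ) : ℝ := r * (1 + r ^ 2) ^ (-(n : ℝ) / 2)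

lemma radialWeight_pos (n : ℕ) {r : ℝ} (hr : 0 < r) : 0 < radialWeight n r := by
  unfold radialWeight; positivity

lemma hasDerivAt_radialWeight (n : ℕ) (r : ℝ) :
    HasDerivAt (radialWeight n)
      ((1 + r ^ 2) ^ (-(n : ℝ) / 2 - 1) * (1 - ((n : ℝ) - 1) * r ^ 2)) r := by
  have hpos : 0 < 1 + r ^ 2 := by positivity
  have hbase : HasDerivAt (fun x : ℝ => 1 + x ^ 2) (2 * r) r := by
    simpa using ((hasDerivAt_id' r).pow 2).const_add 1
  refine ((hasDerivAt_id' r).mul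
    (hbase.rpow_const (p := -(n : ℝ) / 2) (Or.inl hpos.ne'))).congr_deriv ?_
  rw [show (1 + r ^ 2) ^ (-(n : ℝ) / 2) = (1 + r ^ 2) ^ (-(n : ℝ) / 2 - 1) * (1 + r ^ 2) by
    rw [← rpow_add_one hpos.ne']; ring_nf]
  ring

lemma radialWeight_lt_radialWeight (n : ℕ) {r s : ℝ} (hr : 0 ≤ r) (hrs : r < s)
    (hs : ((n : ℝ) - 1) * s ^ 2 ≤ 1) : radialWeight n r < radialWeight n s := by
  refine strictMonoOn_of_deriv_pos (convex_Icc r s)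
    (fun x _ => (hasDerivAt_radialWeight n x).continuousAt.continuousWithinAt) (fun x hx => ?_)
    ⟨le_rfl, hrs.le⟩ ⟨hrs.le, le_rfl⟩ hrs
  rw [interior_Icc] at hx
  obtain ⟨hrx, hxs⟩ := hx
  rw [(hasDerivAt_radialWeight n x).deriv]
  have hx2 : x ^ 2 < s ^ 2 := by nlinarith
  have hx : ((n : ℝ) - 1) * x ^ 2 < 1 := by
    rcases le_or_gt ((n : ℝ) - 1) 0 with h | h <;> nlinarith
  have hpow : 0 < (1 + x ^ 2) ^ (-(n : ℝ) / 2 - 1) := by positivity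
  exact mul_pos hpow (by linarith)

lemma exists_gt_mul_sq_lt_one {c x : ℝ} (h : c * x ^ 2 < 1) : ∃ r, x < r ∧ c * r ^ 2 < 1 := by
  have hev : ∀ᶠ r in nhdsWithin x (Set.Ioi x), c * r ^ 2 < 1 :=
    ((by fun_prop : Continuous fun r : ℝ => c * r ^ 2).tendsto x).eventually_lt_const h
      |>.filter_mono nhdsWithin_le_nhds
  exact (hev.and self_mem_nhdsWithin).exists.imp fun r h => ⟨h.2, h.1⟩

lemma exists_norm_eq_norm_apply_le {E : Type*} [NormedAddCommGroup E] [NormedSpace ℂ E]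
    {f : ℂ → E} (hf : Differentiable ℂ f) {w : ℂ} {r : ℝ} (hw : ‖w‖ < r) :
    ∃ z, ‖z‖ = r ∧ ‖f w‖ ≤ ‖f z‖ := by
  have hr : 0 < r := (norm_nonneg w).trans_lt hw
  obtain ⟨z, hz, hmax⟩ := Complex.exists_mem_frontier_isMaxOn_norm Metric.isBounded_ball
    (Metric.nonempty_ball.2 hr) (hf.diffContOnCl (s := Metric.ball (0 : ℂ) r))
  rw [frontier_ball 0 hr.ne', mem_sphere_zero_iff_norm] at hz
  rw [closure_ball 0 hr.ne'] at hmax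
  exact ⟨z, hz, hmax (mem_closedBall_zero_iff.2 hw.le)⟩

lemma apply_ne_zero_of_forall_radialWeight_mul_le (n : ℕ) {f : ℂ → ℂ} (hf : Continuous f)
    (hf0 : f 0 ≠ 0) {w : ℂ}
    (hmax : ∀ z, radialWeight n ‖z‖ * ‖f z‖ ≤ radialWeight n ‖w‖ * ‖f w‖) :
    f w ≠ 0 := by
  intro hw
  have hzero : Set.EqOn f 0 {0}ᶜ := fun z hz => by
    have := hmax z
    rw [hw, norm_zero, mul_zero] at this
    exact norm_le_zero_iff.1 <|
      nonpos_of_mul_nonpos_right this (radialWeight_pos n (norm_pos_iff.2 hz))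
  exact hf0 (congrFun (hf.ext_on (dense_compl_singleton 0) continuous_const hzero) 0)

theorem one_le_mul_sq_of_forall_radialWeight_mul_le (n : ℕ) {f : ℂ → ℂ}
    (hf : Differentiable ℂ f) {w : ℂ} (hfw : f w ≠ 0)
    (hmax : ∀ z, radialWeight n ‖z‖ * ‖f z‖ ≤ radialWeight n ‖w‖ * ‖f w‖) :
    1 ≤ ((n : ℝ) - 1) * ‖w‖ ^ 2 := by
  by_contra! h
  obtain ⟨r, hwr, hr⟩ := exists_gt_mul_sq_lt_one h
  obtain ⟨z, hz, hle⟩ := exists_norm_eq_norm_apply_le hf hwr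
  refine (hmax z).not_gt ?_
  calc radialWeight n ‖w‖ * ‖f w‖ < radialWeight n r * ‖f w‖ :=
        mul_lt_mul_of_pos_right (radialWeight_lt_radialWeight n (norm_nonneg w) hwr hr.le)
          (norm_pos_iff.2 hfw)
    _ ≤ radialWeight n ‖z‖ * ‖f z‖ := by
        rw [hz]
        exact mul_le_mul_of_nonneg_left hle
          (radialWeight_pos n ((norm_nonneg w).trans_lt hwr)).le

theorem cp1_max_point_far_from_zero_general
    (n : ℕ) (Q : Polynomial ℂ) (hQ0 : Q.eval 0 ≠ 0)
    (F : ℂ → ℝ)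
    (hF : ∀ z : ℂ, F z =
      ‖z‖ * ‖Q.eval z‖ * (1 + ‖z‖ ^ 2) ^ (-(n : ℝ) / 2))
    (a : ℝ)
    (hmax : ∀ z : ℂ, F z ≤ F (a : ℂ)) :
    a ^ 2 ≥ 1 / ((n : ℝ) - 1) := by
  have hF_weight : ∀ z, F z = radialWeight n ‖z‖ * ‖Q.eval z‖ := fun z => by
    rw [hF, radialWeight, mul_right_comm]
  simp only [hF_weight] at hmax
  have hQa := apply_ne_zero_of_forall_radialWeight_mul_le n Q.continuous hQ0 hmax
  have h := one_le_mul_sq_of_forall_radialWeight_mul_le n Q.differentiable hQa hmax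
  rw [Complex.norm_real, norm_eq_abs, sq_abs] at h
  have hn : 0 < (n : ℝ) - 1 := by nlinarith [sq_nonneg a]
  rw [ge_iff_le, div_le_iff₀ hn]
  linarith

/-- Let `Q ∈ ℂ[z]` be a nonzero polynomial of degree at most `n - 1` with
`Q(0) ≠ 0`, `n ≥ 2`, and `F(z) = |z Q(z)| (1 + |z|²)^{-n/2}`. If `F` attains its maximum on `ℂ`
at a real point `a > 0`, then `a² ≥ 1/(n-1)`. -/
theorem cp1_max_point_far_from_zero
    (n : ℕ) (hn : 2 ≤ n) (Q : Polynomial ℂ) (hQ0 : Q.eval 0 ≠ 0)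
    (hdeg : Q.natDegree ≤ n - 1)
    (F : ℂ → ℝ)
    (hF : ∀ z : ℂ, F z =
      ‖z‖ * ‖Q.eval z‖ * (1 + ‖z‖ ^ 2) ^ (-(n : ℝ) / 2))
    (a : ℝ) (ha : 0 < a)
    (hmax : ∀ z : ℂ, F z ≤ F (a : ℂ)) :
    a ^ 2 ≥ 1 / ((n : ℝ) - 1) :=
  cp1_max_point_far_from_zero_general n Q hQ0 F hF a hmax
end
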